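/- arXiv:2408.11232 — 6 statements merged into one kernel-verified Lean document; each statement's English description precedes it below -/
import Mathlib

section
/- Let p be an odd prime and ℓ ≥ 1. If A, B, C are three nonempty subsets of 𝔽_p^ℓ such that (a) (A + B) ∩ C = ∅, (b) |A| + |B| + |C| > (p²+1)·p^{ℓ−2}, and (c) |B| + p^{ℓ−1} > |A − C|, then B − B = 𝔽_p^ℓ and |A| + |C| ≤ (p+1)·p^{ℓ−1}/2. -/
open Pointwise

/-- A set in an additive group is sum-free if `x + y = z` has no solution in it. -/
def IsSumFree {G : Type*} [AddCommGroup G] (A : Set G) : Prop :=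
  ∀ x ∈ A, ∀ y ∈ A, x + y ∉ A

/-- Two subsets (of possibly two isomorphic groups) are isomorphic if some additive
isomorphism maps one onto the other. -/
def IsoSets {G H : Type*} [AddCommGroup G] [AddCommGroup H] (A : Set G) (B : Set H) : Prop :=
  ∃ e : G ≃+ H, e '' A = B

/-- The hierarchy `SF k G`: `SF 0` consists of all sum-free sets and `SF (k+1)` of those
members of `SF k` contained in no member of `SF k` of maximum size. -/
noncomputable def SF (G : Type*) [AddCommGroup G] [Fintype G] : ℕ → Set (Set G)
  | 0 => {A | IsSumFree A}
  | k + 1 =>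
      {A | A ∈ SF G k ∧
        ¬ ∃ B ∈ SF G k, B.ncard = sSup (Set.ncard '' SF G k) ∧ A ⊆ B}

/-- `sf k G` is the maximum size of a member of `SF k G` (zero if `SF k G` is empty). -/
noncomputable def sf (G : Type*) [AddCommGroup G] [Fintype G] (k : ℕ) : ℕ :=
  sSup (Set.ncard '' SF G k)

/-- The members of `SF k G` of maximum size. -/
noncomputable def SFmax (G : Type*) [AddCommGroup G] [Fintype G] (k : ℕ) : Set (Set G) :=
  {A | A ∈ SF G k ∧ A.ncard = sf G k}

/-- The set of residues mod `p` of the integers from `a` to `b`. -/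
def Ival (p a b : ℕ) : Set (ZMod p) :=
  (fun i : ℕ => (i : ZMod p)) '' Set.Icc a b

/-- The model very structured set in `𝔽_p × 𝔽_p^d` associated with `P ⊆ 𝔽_p^d`,
for `p = 6m - 1`. -/
def VSModel (p m d : ℕ) (P : Set (Fin d → ZMod p)) : Set (ZMod p × (Fin d → ZMod p)) :=
  {(((2*m-1 : ℕ) : ZMod p), (0 : Fin d → ZMod p))} ∪
  ({((2*m : ℕ) : ZMod p)} ×ˢ Pᶜ) ∪
  ((Ival p (2*m+1) (4*m-3)) ×ˢ (Set.univ : Set (Fin d → ZMod p))) ∪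
  ({((4*m-2 : ℕ) : ZMod p)} ×ˢ ({(0 : Fin d → ZMod p)}ᶜ)) ∪
  ({((4*m-1 : ℕ) : ZMod p)} ×ˢ P)

/-- `B ⊆ 𝔽_p^ℓ` is very structured if for some `P ⊆ 𝔽_p^{ℓ-1}` with `0 ∉ P + P` it is
isomorphic to the model set. -/
def IsVeryStructured (p m ℓ : ℕ) (B : Set (Fin ℓ → ZMod p)) : Prop :=
  ∃ P : Set (Fin (ℓ - 1) → ZMod p),
    (0 : Fin (ℓ - 1) → ZMod p) ∉ P + P ∧ IsoSets B (VSModel p m (ℓ - 1) P)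

/-- `A ⊆ 𝔽_p^n` is structured if it is isomorphic to `B × 𝔽_p^{n-ℓ}` for some `1 ≤ ℓ ≤ n`
and a very structured `B ⊆ 𝔽_p^ℓ`. -/
def IsStructured (p m n : ℕ) {G : Type*} [AddCommGroup G] (A : Set G) : Prop :=
  ∃ ℓ : ℕ, 1 ≤ ℓ ∧ ℓ ≤ n ∧ ∃ B : Set (Fin ℓ → ZMod p),
    IsVeryStructured p m ℓ B ∧
    IsoSets A (B ×ˢ (Set.univ : Set (Fin (n - ℓ) → ZMod p)))


section Transform
variable {G : Type*} [AddCommGroup G] [DecidableEq G]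

/-- The stabilizer of a finset, as an additive subgroup. -/
def finsetStab (X : Finset G) : AddSubgroup G where
  carrier := {g | X.image (· + g) = X}
  zero_mem' := by simp only [Set.mem_setOf_eq, add_zero, Finset.image_id']
  add_mem' := by
    intro a b ha hb
    simp only [Set.mem_setOf_eq] at *
    calc X.image (fun x => x + (a + b))
        = X.image ((fun x => x + b) ∘ (fun x => x + a)) :=
          Finset.image_congr (fun x _ => by simp [add_assoc])
      _ = (X.image (fun x => x + a)).image (fun x => x + b) :=
          (Finset.image_image).symm
      _ = X := by rw [ha, hb]
  neg_mem' := by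
    intro a ha
    simp only [Set.mem_setOf_eq] at *
    conv_lhs => rw [← ha]
    rw [Finset.image_image]
    simp

lemma mem_finsetStab {X : Finset G} {g : G} : g ∈ finsetStab X ↔ X.image (· + g) = X :=
  Iff.rfl

/-- The Dyson transform iteration: starting from nonempty `X`, `Y`, we can find
`X' ⊇ X`, `Y' ⊆ Y` with the same total size, sumset inside `X + Y`, such that `X'` is
periodic with respect to a subgroup containing all differences of `Y'`. -/
lemma dyson_transform : ∀ (n : ℕ) (X Y : Finset G), Y.card ≤ n → X.Nonempty → Y.Nonempty →
    ∃ (X' Y' : Finset G) (K : AddSubgroup G),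
      X ⊆ X' ∧ Y' ⊆ Y ∧ Y'.Nonempty ∧
      X'.card + Y'.card = X.card + Y.card ∧
      X' + Y' ⊆ X + Y ∧
      (∀ x ∈ X', ∀ k ∈ K, x + k ∈ X') ∧
      (∀ y₁ ∈ Y', ∀ y₂ ∈ Y', y₁ - y₂ ∈ K) := by
  intro n
  induction n with
  | zero =>
    intro X Y hY hXn hYn
    exact absurd (Finset.card_pos.2 hYn) (by omega)
  | succ n ih =>
    intro X Y hY hXn hYn
    by_cases hterm : ∀ x ∈ X, ∀ y ∈ Y, ∀ z ∈ Y, z + (x - y) ∈ X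
    · refine ⟨X, Y, finsetStab X, subset_rfl, subset_rfl, hYn, rfl, subset_rfl, ?_, ?_⟩
      · intro x hx k hk
        rw [mem_finsetStab] at hk
        rw [← hk]
        exact Finset.mem_image_of_mem _ hx
      · intro y₁ h₁ y₂ h₂
        rw [mem_finsetStab]
        apply Finset.eq_of_subset_of_card_le
        · intro u hu
          obtain ⟨x, hx, rfl⟩ := Finset.mem_image.1 hu
          have := hterm x hx y₂ h₂ y₁ h₁
          rwa [show y₁ + (x - y₂) = x + (y₁ - y₂) by abel] at this
        · rw [Finset.card_image_of_injective _ (add_left_injective _)]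
    · push_neg at hterm
      obtain ⟨x, hx, y, hy, z, hz, hzx⟩ := hterm
      set e := x - y with he
      set Y' := Y.filter (fun w => w + e ∈ X) with hY'
      set X' := X ∪ Y.image (· + e) with hX'
      have hyY' : y ∈ Y' := by
        rw [hY', Finset.mem_filter]
        exact ⟨hy, by rw [he]; simpa using hx⟩
      have hzY' : z ∉ Y' := by
        rw [hY', Finset.mem_filter]
        rintro ⟨-, h⟩
        exact hzx h
      have hY'sub : Y' ⊆ Y := Finset.filter_subset _ _
      have hcard : Y'.card < Y.card :=
        Finset.card_lt_card ⟨hY'sub, fun hsub => hzY' (hsub hz)⟩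
      have hXX' : X ⊆ X' := Finset.subset_union_left
      have himg : Y'.image (· + e) = X ∩ Y.image (· + e) := by
        ext u
        simp only [Finset.mem_image, Finset.mem_inter, hY', Finset.mem_filter]
        constructor
        · rintro ⟨w, ⟨hw, hwX⟩, rfl⟩
          exact ⟨hwX, w, hw, rfl⟩
        · rintro ⟨hu, w, hw, rfl⟩
          exact ⟨w, ⟨hw, hu⟩, rfl⟩
      have hc1 : X'.card + Y'.card = X.card + Y.card := by
        have h2 := Finset.card_union_add_card_inter X (Y.image (· + e))
        have h3 : Y'.card = (X ∩ Y.image (· + e)).card := by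
          rw [← himg, Finset.card_image_of_injective _ (add_left_injective _)]
        have h4 : (Y.image (· + e)).card = Y.card :=
          Finset.card_image_of_injective _ (add_left_injective _)
        rw [hX']
        omega
      have hsum : X' + Y' ⊆ X + Y := by
        intro u hu
        rw [Finset.mem_add] at hu ⊢
        obtain ⟨a, ha, b, hb, rfl⟩ := hu
        rcases Finset.mem_union.1 ha with haX | haI
        · exact ⟨a, haX, b, hY'sub hb, rfl⟩
        · obtain ⟨w, hw, rfl⟩ := Finset.mem_image.1 haI
          have hbe : b + e ∈ X := (Finset.mem_filter.1 hb).2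
          exact ⟨b + e, hbe, w, hw, by abel⟩
      obtain ⟨X'', Y'', K, h1, h2, h3, h4, h5, h6, h7⟩ :=
        ih X' Y' (by omega) (hXn.mono hXX') ⟨y, hyY'⟩
      exact ⟨X'', Y'', K, hXX'.trans h1, h2.trans hY'sub, h3, by omega,
        h5.trans hsum, h6, h7⟩

end Transform

section Count
variable {G : Type*} [AddCommGroup G] [Fintype G] [DecidableEq G] (K : AddSubgroup G)

/-- The subgroup as a finset. -/
noncomputable def KFin : Finset G := (Set.toFinite (K : Set G)).toFinset

lemma mem_KFin {g : G} : g ∈ KFin K ↔ g ∈ K := Set.Finite.mem_toFinset _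

variable [DecidableEq (G ⧸ K)]

lemma fiber_card_le (T : Finset G) (c : G ⧸ K) :
    (T.filter (fun t => QuotientAddGroup.mk' K t = c)).card ≤ (KFin K).card := by
  rcases (T.filter (fun t => QuotientAddGroup.mk' K t = c)).eq_empty_or_nonempty with h | h
  · rw [h]
    simp
  · obtain ⟨t₀, ht₀⟩ := h
    have ht₀' := (Finset.mem_filter.1 ht₀).2
    apply Finset.card_le_card_of_injOn (fun t => t - t₀)
    · intro t ht
      have ht' := (Finset.mem_filter.1 ht).2
      simp only [Finset.mem_coe, mem_KFin]
      have heq : QuotientAddGroup.mk' K t₀ = QuotientAddGroup.mk' K t := by rw [ht₀', ht']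
      obtain ⟨z, hz, hzeq⟩ := (QuotientAddGroup.mk'_eq_mk' K).1 heq
      have hz2 : t - t₀ = z := by rw [← hzeq]; abel
      rwa [hz2]
    · intro a _ b _ hab
      exact sub_left_injective hab
  
lemma fiber_card_eq (T : Finset G) (hT : ∀ t ∈ T, ∀ k ∈ K, t + k ∈ T) {t₀ : G} (ht₀ : t₀ ∈ T) :
    (T.filter (fun t => QuotientAddGroup.mk' K t = QuotientAddGroup.mk' K t₀)).card
      = (KFin K).card := by
  refine le_antisymm (fiber_card_le K T _) ?_
  apply Finset.card_le_card_of_injOn (fun k => t₀ + k)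
  · intro k hk
    rw [Finset.mem_coe, mem_KFin] at hk
    refine Finset.mem_filter.2 ⟨hT t₀ ht₀ k hk, ?_⟩
    symm
    exact (QuotientAddGroup.mk'_eq_mk' K).2 ⟨k, hk, rfl⟩
  · intro a _ b _ hab
    exact add_right_injective t₀ hab

lemma stable_card (T : Finset G) (hT : ∀ t ∈ T, ∀ k ∈ K, t + k ∈ T) :
    T.card = (T.image (QuotientAddGroup.mk' K)).card * (KFin K).card := by
  rw [Finset.card_eq_sum_card_fiberwise
    (f := QuotientAddGroup.mk' K) (t := T.image (QuotientAddGroup.mk' K))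
    (fun x hx => Finset.mem_image_of_mem _ hx)]
  have h1 : ∀ c ∈ T.image (QuotientAddGroup.mk' K),
      (T.filter (fun t => QuotientAddGroup.mk' K t = c)).card = (KFin K).card := by
    intro c hc
    obtain ⟨t₀, ht₀, rfl⟩ := Finset.mem_image.1 hc
    exact fiber_card_eq K T hT ht₀
  rw [Finset.sum_congr rfl h1, Finset.sum_const, smul_eq_mul]

lemma card_le_image_mul (T : Finset G) :
    T.card ≤ (T.image (QuotientAddGroup.mk' K)).card * (KFin K).card := by
  rw [Finset.card_eq_sum_card_fiberwise
    (f := QuotientAddGroup.mk' K) (t := T.image (QuotientAddGroup.mk' K))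
    (fun x hx => Finset.mem_image_of_mem _ hx)]
  calc ∑ c ∈ T.image (QuotientAddGroup.mk' K),
        (T.filter fun t => QuotientAddGroup.mk' K t = c).card
      ≤ ∑ _c ∈ T.image (QuotientAddGroup.mk' K), (KFin K).card :=
        Finset.sum_le_sum (fun c _ => fiber_card_le K T c)
    _ = _ := by rw [Finset.sum_const, smul_eq_mul]

lemma univ_card_eq [Fintype (G ⧸ K)] :
    Fintype.card G = Fintype.card (G ⧸ K) * (KFin K).card := by
  have h1 := stable_card K Finset.univ (fun t _ k _ => Finset.mem_univ _)
  have h2 : (Finset.univ.image (QuotientAddGroup.mk' K)) = Finset.univ := by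
    refine Finset.eq_univ_of_forall (fun c => ?_)
    obtain ⟨t, rfl⟩ := QuotientAddGroup.mk'_surjective K c
    exact Finset.mem_image_of_mem _ (Finset.mem_univ t)
  rwa [Finset.card_univ, h2, Finset.card_univ] at h1

end Count

section Cycle
variable {p ℓ : ℕ}

lemma cycle_bound (hp : p.Prime) (hodd : Odd p) (hℓ : 1 ≤ ℓ)
    (g : Fin ℓ → ZMod p) (Bf : Finset (Fin ℓ → ZMod p))
    (hB : ∀ x ∈ Bf, x + g ∉ Bf) :
    2 * Bf.card ≤ (p - 1) * p ^ (ℓ - 1) := by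
  haveI : NeZero p := ⟨hp.pos.ne'⟩
  have key : ∀ x : Fin ℓ → ZMod p,
      2 * (Finset.univ.filter (fun j : ZMod p => x + j • g ∈ Bf)).card ≤ p - 1 := by
    intro x
    set T := Finset.univ.filter (fun j : ZMod p => x + j • g ∈ Bf) with hT
    have hdisj : Disjoint T (T.image (· + (1 : ZMod p))) := by
      rw [Finset.disjoint_right]
      intro j hj hjT
      obtain ⟨i, hi, rfl⟩ := Finset.mem_image.1 hj
      have h1 : x + i • g ∈ Bf := (Finset.mem_filter.1 hi).2
      have h2 : x + (i + 1) • g ∈ Bf := (Finset.mem_filter.1 hjT).2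
      apply hB _ h1
      have heq : x + i • g + g = x + (i + 1) • g := by
        rw [add_smul, one_smul]; abel
      rwa [heq]
    have hcards : T.card + T.card ≤ p := by
      have h3 := Finset.card_union_of_disjoint hdisj
      have h4 : (T.image (· + (1 : ZMod p))).card = T.card :=
        Finset.card_image_of_injective _ (add_left_injective _)
      have h5 : (T ∪ T.image (· + (1 : ZMod p))).card ≤ Finset.univ.card :=
        Finset.card_le_univ _
      rw [Finset.card_univ, ZMod.card] at h5
      omega
    have hne : 2 * T.card ≠ p := by
      intro h
      rw [← h] at hodd
      exact (Nat.not_odd_iff_even.mpr (even_two_mul _)) hodd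
    omega
  have count : p * Bf.card
      = ∑ x : Fin ℓ → ZMod p,
          (Finset.univ.filter (fun j : ZMod p => x + j • g ∈ Bf)).card := by
    have lhs : ∀ j : ZMod p,
        (Finset.univ.filter (fun x : Fin ℓ → ZMod p => x + j • g ∈ Bf)).card = Bf.card := by
      intro j
      apply Finset.card_bij' (fun x _ => x + j • g) (fun y _ => y - j • g)
      · intro x hx
        exact (Finset.mem_filter.1 hx).2
      · intro y hy
        refine Finset.mem_filter.2 ⟨Finset.mem_univ _, ?_⟩
        simpa using hy
      · intro x _
        abel
      · intro y _
        abel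
    calc p * Bf.card = ∑ _j : ZMod p, Bf.card := by
          rw [Finset.sum_const, Finset.card_univ, ZMod.card, smul_eq_mul]
      _ = ∑ j : ZMod p,
            (Finset.univ.filter (fun x : Fin ℓ → ZMod p => x + j • g ∈ Bf)).card :=
          Finset.sum_congr rfl (fun j _ => (lhs j).symm)
      _ = ∑ j : ZMod p, ∑ x : Fin ℓ → ZMod p, (if x + j • g ∈ Bf then 1 else 0) :=
          Finset.sum_congr rfl (fun j _ => Finset.card_filter _ _)
      _ = ∑ x : Fin ℓ → ZMod p, ∑ j : ZMod p, (if x + j • g ∈ Bf then 1 else 0) :=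
          Finset.sum_comm
      _ = ∑ x : Fin ℓ → ZMod p,
            (Finset.univ.filter (fun j : ZMod p => x + j • g ∈ Bf)).card :=
          Finset.sum_congr rfl (fun x _ => (Finset.card_filter _ _).symm)
  have cardG : Fintype.card (Fin ℓ → ZMod p) = p ^ ℓ := by
    rw [Fintype.card_fun, ZMod.card, Fintype.card_fin]
  have total : 2 * (p * Bf.card) ≤ (p - 1) * p ^ ℓ := by
    calc 2 * (p * Bf.card)
        = ∑ x : Fin ℓ → ZMod p,
            2 * (Finset.univ.filter (fun j : ZMod p => x + j • g ∈ Bf)).card := by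
          rw [count, Finset.mul_sum]
      _ ≤ ∑ _x : Fin ℓ → ZMod p, (p - 1) := Finset.sum_le_sum (fun x _ => key x)
      _ = (p - 1) * p ^ ℓ := by
          rw [Finset.sum_const, Finset.card_univ, cardG, smul_eq_mul, Nat.mul_comm]
  have hpow : p ^ ℓ = p ^ (ℓ - 1) * p := by
    conv_lhs => rw [show ℓ = (ℓ - 1) + 1 by omega]
    rw [pow_succ]
  apply Nat.le_of_mul_le_mul_right _ hp.pos
  calc 2 * Bf.card * p = 2 * (p * Bf.card) := by ring
    _ ≤ (p - 1) * p ^ ℓ := total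
    _ = (p - 1) * p ^ (ℓ - 1) * p := by rw [hpow, Nat.mul_assoc]

end Cycle

/-- for an odd prime `p` and `ℓ ≥ 1`, if nonempty `A, B, C ⊆ 𝔽_p^ℓ` satisfy
`(A + B) ∩ C = ∅`, `|A| + |B| + |C| > (p²+1)·p^{ℓ-2}` and `|B| + p^{ℓ-1} > |A - C|`, then
`B - B = 𝔽_p^ℓ` and `|A| + |C| ≤ (p+1)·p^{ℓ-1}/2`. -/
theorem stmt_5 (p ℓ : ℕ) (hp : p.Prime) (hodd : Odd p) (hℓ : 1 ≤ ℓ)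
    (A B C : Set (Fin ℓ → ZMod p))
    (hA : A.Nonempty) (hB : B.Nonempty) (hC : C.Nonempty)
    (ha : (A + B) ∩ C = ∅)
    (hb : ((p : ℝ) ^ 2 + 1) * (p : ℝ) ^ ((ℓ : ℤ) - 2) <
      (A.ncard : ℝ) + B.ncard + C.ncard)
    (hc : (A - C).ncard < B.ncard + p ^ (ℓ - 1)) :
    B - B = Set.univ ∧
    (A.ncard : ℝ) + C.ncard ≤ ((p : ℝ) + 1) * (p : ℝ) ^ (ℓ - 1) / 2 := by
  classical
  haveI : NeZero p := ⟨hp.pos.ne'⟩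
  set q := p ^ (ℓ - 1) with hqdef
  set Af := A.toFinset with hAf
  set Bf := B.toFinset with hBf
  set Cf := C.toFinset with hCf
  have hAcard : A.ncard = Af.card := Set.ncard_eq_toFinset_card' A
  have hBcard : B.ncard = Bf.card := Set.ncard_eq_toFinset_card' B
  have hCcard : C.ncard = Cf.card := Set.ncard_eq_toFinset_card' C
  have hAne : Af.Nonempty := Set.toFinset_nonempty.2 hA
  have hBne : Bf.Nonempty := Set.toFinset_nonempty.2 hB
  have hCne : Cf.Nonempty := Set.toFinset_nonempty.2 hC
  set N := Af.card + Bf.card + Cf.card with hNdef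
  have cardG : Fintype.card (Fin ℓ → ZMod p) = p ^ ℓ := by
    rw [Fintype.card_fun, ZMod.card, Fintype.card_fin]
  have hq : p ^ ℓ = p * q := by
    rw [hqdef, ← pow_succ']
    congr 1
    omega
  have hp0R : (p : ℝ) ≠ 0 := by exact_mod_cast hp.pos.ne'
  -- numeric consequences of hb
  have hb' : ((p : ℝ) ^ 2 + 1) * (p : ℝ) ^ ((ℓ : ℤ) - 2) < (N : ℝ) := by
    rw [hAcard, hBcard, hCcard] at hb
    rw [hNdef]
    push_cast
    exact hb
  have hsplit : ((p : ℝ) ^ 2 + 1) * (p : ℝ) ^ ((ℓ : ℤ) - 2)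
      = (p : ℝ) ^ (ℓ : ℤ) + (p : ℝ) ^ ((ℓ : ℤ) - 2) := by
    rw [add_mul, one_mul, ← zpow_natCast (p : ℝ) 2, ← zpow_add₀ hp0R]
    rw [show ((2 : ℕ) : ℤ) + ((ℓ : ℤ) - 2) = (ℓ : ℤ) by push_cast; ring]
  rw [hsplit] at hb'
  have hN1 : p ^ ℓ + 1 ≤ N := by
    have hpow : (0 : ℝ) < (p : ℝ) ^ ((ℓ : ℤ) - 2) := by
      apply zpow_pos
      exact_mod_cast hp.pos
    have h2 : ((p ^ ℓ : ℕ) : ℝ) < (N : ℝ) := by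
      push_cast
      rw [← zpow_natCast (p : ℝ) ℓ]
      linarith
    exact_mod_cast h2
  have hN2 : 2 ≤ ℓ → p ^ ℓ + p ^ (ℓ - 2) + 1 ≤ N := by
    intro hl2
    have h2 : ((p ^ ℓ + p ^ (ℓ - 2) : ℕ) : ℝ) < (N : ℝ) := by
      push_cast
      rw [← zpow_natCast (p : ℝ) ℓ, ← zpow_natCast (p : ℝ) (ℓ - 2),
        show ((ℓ - 2 : ℕ) : ℤ) = (ℓ : ℤ) - 2 by omega]
      linarith
    exact_mod_cast h2
  -- hypothesis (a) in finset form
  have haF : ∀ a ∈ Af, ∀ b ∈ Bf, a + b ∉ Cf := by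
    intro a haA b hbB hab
    have h1 : a + b ∈ (A + B) ∩ C :=
      ⟨Set.add_mem_add (Set.mem_toFinset.1 haA) (Set.mem_toFinset.1 hbB),
        Set.mem_toFinset.1 hab⟩
    rw [ha] at h1
    exact h1
  -- hypothesis (c) in finset form
  have hACfin : (A - C).toFinset = Af - Cf := by
    ext u
    simp only [Set.mem_toFinset, Set.mem_sub, Finset.mem_sub, hAf, hCf]
  have hcF : (Af - Cf).card < Bf.card + q := by
    rw [← hACfin]
    calc (A - C).toFinset.card = (A - C).ncard := (Set.ncard_eq_toFinset_card' _).symm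
      _ < B.ncard + q := hc
      _ = Bf.card + q := by rw [hBcard]
  -- apply the Dyson transform to (A, -C)
  have hnCne : (-Cf).Nonempty := hCne.neg
  obtain ⟨X', Y', K, hAX, hYC, hYne, hcardsum, hsub, hstab, hdiff⟩ :=
    dyson_transform (-Cf).card Af (-Cf) le_rfl hAne hnCne
  obtain ⟨y₀, hy₀⟩ := hYne
  set S' := X'.image (· + y₀) with hS'
  have hX'ne : X'.Nonempty := hAne.mono hAX
  have hS'card : S'.card = X'.card :=
    Finset.card_image_of_injective _ (add_left_injective _)
  have hS'stab : ∀ s ∈ S', ∀ k ∈ K, s + k ∈ S' := by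
    intro s hs k hk
    obtain ⟨x, hx, rfl⟩ := Finset.mem_image.1 hs
    exact Finset.mem_image.2 ⟨x + k, hstab x hx k hk, by abel⟩
  have hS'sub : S' ⊆ Af - Cf := by
    intro u hu
    obtain ⟨x, hx, rfl⟩ := Finset.mem_image.1 hu
    have h2 : x + y₀ ∈ Af + -Cf := hsub (Finset.add_mem_add hx hy₀)
    rwa [← sub_eq_add_neg] at h2
  have hS'B : ∀ u ∈ S', u ∉ -Bf := by
    intro u huS hunB
    obtain ⟨a, haA, c, hcC, hac⟩ := Finset.mem_sub.1 (hS'sub huS)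
    obtain ⟨b, hbB, hbe⟩ := Finset.mem_neg.1 hunB
    have h1 : a - c = -b := by rw [hac, hbe]
    have h2 : c = a + b := by
      have h3 := sub_eq_iff_eq_add.1 h1
      rw [h3]
      abel
    exact haF a haA b hbB (h2 ▸ hcC)
  -- cardinal bookkeeping
  have hYle : Y'.card ≤ (KFin K).card := by
    apply Finset.card_le_card_of_injOn (fun y => y - y₀)
    · intro y hy
      simp only [Finset.mem_coe, mem_KFin]
      exact hdiff y hy y₀ hy₀
    · intro x _ y _ hxy
      exact sub_left_injective hxy
  have hSBdisj : Disjoint S' (-Bf) := by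
    rw [Finset.disjoint_left]
    exact hS'B
  have hSB_le : S'.card + Bf.card ≤ p ^ ℓ := by
    have h1 := Finset.card_union_of_disjoint hSBdisj
    have h2 : (S' ∪ -Bf).card ≤ Fintype.card (Fin ℓ → ZMod p) := by
      rw [← Finset.card_univ]
      exact Finset.card_le_univ _
    rw [cardG] at h2
    have h3 : (-Bf).card = Bf.card := Finset.card_neg _
    omega
  have hsum2 : X'.card + Y'.card = Af.card + Cf.card := by
    have h4 : (-Cf).card = Cf.card := Finset.card_neg _
    omega
  have hsum3 : N = S'.card + Y'.card + Bf.card := by omega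
  -- K is a hyperplane
  haveI : Fintype ((Fin ℓ → ZMod p) ⧸ K) := Fintype.ofFinite _
  have hLag := univ_card_eq K
  have hdvd : (KFin K).card ∣ p ^ ℓ :=
    ⟨Fintype.card ((Fin ℓ → ZMod p) ⧸ K), by rw [← cardG, hLag, Nat.mul_comm]⟩
  obtain ⟨j, hjle, hjcard⟩ := (Nat.dvd_prime_pow hp).1 hdvd
  have hKne : (KFin K).card ≠ p ^ ℓ := by
    intro htop
    have huniv : KFin K = Finset.univ :=
      Finset.eq_univ_of_card _ (by rw [htop, ← cardG])
    obtain ⟨b₀, hb₀⟩ := hBne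
    obtain ⟨s₀, hs₀⟩ := hX'ne
    have hs₀' : s₀ + y₀ ∈ S' := Finset.mem_image_of_mem _ hs₀
    have hk : (-b₀ - (s₀ + y₀)) ∈ K := by
      rw [← mem_KFin, huniv]
      exact Finset.mem_univ _
    have h5 := hS'stab _ hs₀' _ hk
    rw [show s₀ + y₀ + (-b₀ - (s₀ + y₀)) = -b₀ by abel] at h5
    exact hS'B _ h5 (Finset.neg_mem_neg hb₀)
  have hKcard : (KFin K).card = q := by
    have hjne : j ≠ ℓ := by
      intro h
      exact hKne (by rw [hjcard, h])
    have hjlow : ℓ - 1 ≤ j := by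
      rcases Nat.lt_or_ge ℓ 2 with hl1 | hl2
      · omega
      · have h5 := hN2 hl2
        have hYlow : p ^ (ℓ - 2) + 1 ≤ Y'.card := by
          have h6 : N ≤ Y'.card + p ^ ℓ := by omega
          omega
        have h7 : p ^ (ℓ - 2) < p ^ j := by
          calc p ^ (ℓ - 2) < p ^ (ℓ - 2) + 1 := Nat.lt_succ_self _
            _ ≤ Y'.card := hYlow
            _ ≤ (KFin K).card := hYle
            _ = p ^ j := hjcard
        have h8 := (Nat.pow_lt_pow_iff_right hp.one_lt).1 h7
        omega
    rw [hjcard, hqdef]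
    congr 1
    omega
  have hquot : Fintype.card ((Fin ℓ → ZMod p) ⧸ K) = p := by
    rw [cardG, hKcard, hq] at hLag
    have hq0 : 0 < q := pow_pos hp.pos _
    exact Nat.eq_of_mul_eq_mul_right hq0 hLag.symm
  -- image counting in the quotient
  set a' := (S'.image (QuotientAddGroup.mk' K)).card with ha'def
  set b' := ((-Bf).image (QuotientAddGroup.mk' K)).card with hb'def
  have hS'count : S'.card = a' * q := by
    rw [ha'def, ← hKcard]
    exact stable_card K S' hS'stab
  have hBcountle : Bf.card ≤ b' * q := by
    have h9 := card_le_image_mul K (-Bf)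
    rw [Finset.card_neg] at h9
    rw [hb'def, ← hKcard]
    exact h9
  have hYq : Y'.card ≤ q := by
    rw [← hKcard]
    exact hYle
  have himgdisj : Disjoint (S'.image (QuotientAddGroup.mk' K))
      ((-Bf).image (QuotientAddGroup.mk' K)) := by
    rw [Finset.disjoint_left]
    intro c hc1 hc2
    obtain ⟨s, hs, rfl⟩ := Finset.mem_image.1 hc1
    obtain ⟨u, hu, huc⟩ := Finset.mem_image.1 hc2
    obtain ⟨z, hz, hzeq⟩ := (QuotientAddGroup.mk'_eq_mk' K).1 huc.symm
    exact hS'B u (hzeq ▸ hS'stab s hs z hz) hu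
  have hab_le : a' + b' ≤ p := by
    have h1 := Finset.card_union_of_disjoint himgdisj
    have h2 : ((S'.image (QuotientAddGroup.mk' K)) ∪
        ((-Bf).image (QuotientAddGroup.mk' K))).card ≤
        Fintype.card ((Fin ℓ → ZMod p) ⧸ K) := by
      rw [← Finset.card_univ]
      exact Finset.card_le_univ _
    rw [hquot] at h2
    omega
  have hab_eq : a' + b' = p := by
    rcases Nat.lt_or_ge (a' + b') p with hlt | hge
    · exfalso
      have e1 : N ≤ (a' + b' + 1) * q := by
        calc N = S'.card + Y'.card + Bf.card := hsum3
          _ ≤ a' * q + q + b' * q := by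
              rw [hS'count]
              exact Nat.add_le_add (Nat.add_le_add le_rfl hYq) hBcountle
          _ = (a' + b' + 1) * q := by ring
      have e2 : (a' + b' + 1) * q ≤ p * q := Nat.mul_le_mul_right _ (by omega)
      have e3 : N ≤ p ^ ℓ := by
        rw [hq]
        exact le_trans e1 e2
      have e4 : p ^ ℓ < N := hN1
      exact absurd (e3.trans_lt e4) (lt_irrefl N)
    · omega
  -- condition (c) forces a' ≤ b'
  have e2 : a' * q < (b' + 1) * q := by
    calc a' * q = S'.card := hS'count.symm
      _ ≤ (Af - Cf).card := Finset.card_le_card hS'sub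
      _ < Bf.card + q := hcF
      _ ≤ b' * q + q := Nat.add_le_add_right hBcountle _
      _ = (b' + 1) * q := by ring
  have e3 : a' ≤ b' := by
    have h10 := lt_of_mul_lt_mul_right e2 (Nat.zero_le q)
    omega
  have e4 : 2 * a' + 1 ≤ p := by
    have h5 : 2 * a' ≤ p := by omega
    have h6 : 2 * a' ≠ p := by
      intro h
      rw [← h] at hodd
      exact (Nat.not_odd_iff_even.2 (even_two_mul _)) hodd
    omega
  -- main cardinality bound
  have e5 : 2 * (Af.card + Cf.card) ≤ (p + 1) * q := by
    calc 2 * (Af.card + Cf.card) = 2 * (X'.card + Y'.card) := by rw [hsum2]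
      _ = 2 * S'.card + 2 * Y'.card := by rw [hS'card]; ring
      _ ≤ 2 * (a' * q) + 2 * q := by
          rw [hS'count]
          exact Nat.add_le_add le_rfl (by omega)
      _ = (2 * a' + 2) * q := by ring
      _ ≤ (p + 1) * q := Nat.mul_le_mul_right _ (by omega)
  -- second goal
  have goal2 : (A.ncard : ℝ) + C.ncard ≤ ((p : ℝ) + 1) * (p : ℝ) ^ (ℓ - 1) / 2 := by
    rw [hAcard, hCcard, le_div_iff₀ (by norm_num : (0 : ℝ) < 2)]
    have hcast : ((2 * (Af.card + Cf.card) : ℕ) : ℝ) ≤ (((p + 1) * q : ℕ) : ℝ) :=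
      Nat.cast_le.2 e5
    rw [hqdef] at hcast
    push_cast at hcast
    linarith
  refine ⟨?_, goal2⟩
  -- first goal : B - B = univ
  have hBbig : ∀ u, (p - 1) * q = u → u + 2 ≤ 2 * Bf.card := by
    intro u hu
    have h7 : p * q + 1 ≤ N := by
      rw [← hq]
      exact hN1
    have h9 : (p - 1) * q + (p + 1) * q = 2 * (p * q) := by
      rw [← Nat.add_mul, show (p - 1) + (p + 1) = 2 * p by omega, Nat.mul_assoc]
    obtain ⟨v, hv⟩ : ∃ v, (p + 1) * q = v := ⟨_, rfl⟩
    obtain ⟨w, hw⟩ : ∃ w, p * q = w := ⟨_, rfl⟩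
    rw [hu, hv, hw] at h9
    rw [hv] at e5
    rw [hw] at h7
    omega
  rw [Set.eq_univ_iff_forall]
  intro g
  by_contra hg
  have hBg : ∀ x ∈ Bf, x + g ∉ Bf := by
    intro x hx hxg
    exact hg (Set.mem_sub.2
      ⟨x + g, Set.mem_toFinset.1 hxg, x, Set.mem_toFinset.1 hx, by abel⟩)
  have h10 := cycle_bound hp hodd hℓ g Bf hBg
  rw [← hqdef] at h10
  obtain ⟨u, hu⟩ : ∃ u, (p - 1) * q = u := ⟨_, rfl⟩
  have h11 := hBbig u hu
  rw [hu] at h10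
  omega
end

section
/- Let p = 6m−1 ≥ 11 be prime and n ≥ 1. Every structured set A ⊆ 𝔽_p^n is sum-free and has size |A| = (2m−1)·p^{n−1}. -/
open Pointwise

section AuxLemmas

lemma my_isSumFree_of_isoSets {G H : Type*} [AddCommGroup G] [AddCommGroup H]
    {A : Set G} {B : Set H} (h : IsoSets A B) (hB : IsSumFree B) : IsSumFree A := by
  obtain ⟨e, rfl⟩ := h
  intro x hx y hy hxy
  exact hB (e x) ⟨x, hx, rfl⟩ (e y) ⟨y, hy, rfl⟩ (by rw [← map_add]; exact ⟨_, hxy, rfl⟩)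

lemma my_ncard_of_isoSets {G H : Type*} [AddCommGroup G] [AddCommGroup H]
    {A : Set G} {B : Set H} (h : IsoSets A B) : A.ncard = B.ncard := by
  obtain ⟨e, rfl⟩ := h
  exact (Set.ncard_image_of_injective A e.injective).symm

lemma my_ncard_prod {α β : Type*} (s : Set α) (t : Set β) :
    (s ×ˢ t).ncard = s.ncard * t.ncard := by
  rw [← Nat.card_coe_set_eq, ← Nat.card_coe_set_eq, ← Nat.card_coe_set_eq,
    Nat.card_congr (Equiv.Set.prod s t), Nat.card_prod]

lemma my_card_pi (p k : ℕ) [NeZero p] : Nat.card (Fin k → ZMod p) = p ^ k := by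
  simp [Nat.card_eq_fintype_card, ZMod.card]

lemma mem_VSModel_iff {p m d : ℕ} (hm : 2 ≤ m) (hpm : p = 6 * m - 1)
    {P : Set (Fin d → ZMod p)} {x : ZMod p} {v : Fin d → ZMod p} :
    (x, v) ∈ VSModel p m d P ↔
      (x.val = 2*m-1 ∧ v = 0) ∨ (x.val = 2*m ∧ v ∉ P) ∨
      (2*m+1 ≤ x.val ∧ x.val ≤ 4*m-3) ∨ (x.val = 4*m-2 ∧ v ≠ 0) ∨
      (x.val = 4*m-1 ∧ v ∈ P) := by
  haveI : NeZero p := ⟨by omega⟩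
  have hval : ∀ k : ℕ, k < p → ((k : ZMod p)).val = k := fun k hk => ZMod.val_cast_of_lt hk
  have hkey : ∀ k : ℕ, k < p → (x = (k : ZMod p) ↔ x.val = k) := by
    intro k hk
    constructor
    · rintro rfl; exact hval k hk
    · intro h; rw [← h, ZMod.natCast_zmod_val]
  simp only [VSModel, Ival, Set.mem_union, Set.mem_singleton_iff, Set.mem_prod,
    Set.mem_image, Set.mem_Icc, Set.mem_compl_iff, Set.mem_univ, and_true,
    Prod.mk.injEq]
  rw [hkey (2*m-1) (by omega), hkey (2*m) (by omega), hkey (4*m-2) (by omega),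
    hkey (4*m-1) (by omega)]
  constructor
  · rintro ((((⟨h1,h2⟩|⟨h1,h2⟩)|⟨i,⟨hi1,hi2⟩,rfl⟩)|⟨h1,h2⟩)|⟨h1,h2⟩)
    · exact Or.inl ⟨h1, h2⟩
    · exact Or.inr (Or.inl ⟨h1, h2⟩)
    · refine Or.inr (Or.inr (Or.inl ?_))
      rw [hval i (by omega)]
      exact ⟨hi1, hi2⟩
    · exact Or.inr (Or.inr (Or.inr (Or.inl ⟨h1, h2⟩)))
    · exact Or.inr (Or.inr (Or.inr (Or.inr ⟨h1, h2⟩)))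
  · rintro (⟨h1,h2⟩|⟨h1,h2⟩|⟨h1,h2⟩|⟨h1,h2⟩|⟨h1,h2⟩)
    · exact Or.inl (Or.inl (Or.inl (Or.inl ⟨h1, h2⟩)))
    · exact Or.inl (Or.inl (Or.inl (Or.inr ⟨h1, h2⟩)))
    · exact Or.inl (Or.inl (Or.inr ⟨x.val, ⟨h1, h2⟩, ZMod.natCast_zmod_val x⟩))
    · exact Or.inl (Or.inr ⟨h1, h2⟩)
    · exact Or.inr ⟨h1, h2⟩

open Pointwise in
lemma VSModel_isSumFree {p m d : ℕ} (hm : 2 ≤ m) (hpm : p = 6 * m - 1)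
    {P : Set (Fin d → ZMod p)} (hP : (0 : Fin d → ZMod p) ∉ P + P) :
    IsSumFree (VSModel p m d P) := by
  haveI : NeZero p := ⟨by omega⟩
  rintro ⟨x, u⟩ hx ⟨y, v⟩ hy hxy
  have hxy' : ((x + y), (u + v)) ∈ VSModel p m d P := hxy
  rw [mem_VSModel_iff hm hpm] at hx hy hxy'
  have hxv := x.val_lt
  have hyv := y.val_lt
  have ha : 2*m-1 ≤ x.val ∧ x.val ≤ 4*m-1 := by
    rcases hx with ⟨h,_⟩|⟨h,_⟩|⟨h1,h2⟩|⟨h,_⟩|⟨h,_⟩ <;> omega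
  have hb : 2*m-1 ≤ y.val ∧ y.val ≤ 4*m-1 := by
    rcases hy with ⟨h,_⟩|⟨h,_⟩|⟨h1,h2⟩|⟨h,_⟩|⟨h,_⟩ <;> omega
  have hadd : (x + y).val = (x.val + y.val) % p := ZMod.val_add x y
  have hc : (x+y).val = x.val + y.val ∨ (x+y).val + p = x.val + y.val := by
    rcases Nat.lt_or_ge (x.val + y.val) p with h | h
    · left; rw [hadd, Nat.mod_eq_of_lt h]
    · right; rw [hadd, Nat.mod_eq_sub_mod h, Nat.mod_eq_of_lt (by omega)]; omega
  rcases hxy' with ⟨hc1, hc2⟩|⟨hc1, hc2⟩|⟨hc1, hc2⟩|⟨hc1, hc2⟩|⟨hc1, hc2⟩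
  · -- sum has val 2m-1, second coordinate 0
    have hx4 : x.val = 4*m-1 := by omega
    have hy4 : y.val = 4*m-1 := by omega
    have hu : u ∈ P := by
      rcases hx with ⟨h,h'⟩|⟨h,h'⟩|⟨h1,h2⟩|⟨h,h'⟩|⟨h,h'⟩ <;> first | exact h' | omega
    have hv : v ∈ P := by
      rcases hy with ⟨h,h'⟩|⟨h,h'⟩|⟨h1,h2⟩|⟨h,h'⟩|⟨h,h'⟩ <;> first | exact h' | omega
    exact hP (hc2 ▸ Set.add_mem_add hu hv)
  · omega
  · omega
  · -- sum has val 4m-2, second coordinate nonzero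
    have hx0 : x.val = 2*m-1 := by omega
    have hy0 : y.val = 2*m-1 := by omega
    have hu : u = 0 := by
      rcases hx with ⟨h,h'⟩|⟨h,h'⟩|⟨h1,h2⟩|⟨h,h'⟩|⟨h,h'⟩ <;> first | exact h' | omega
    have hv : v = 0 := by
      rcases hy with ⟨h,h'⟩|⟨h,h'⟩|⟨h1,h2⟩|⟨h,h'⟩|⟨h,h'⟩ <;> first | exact h' | omega
    exact hc2 (by rw [hu, hv, add_zero])
  · -- sum has val 4m-1, second coordinate in P
    have hsplit : (x.val = 2*m-1 ∧ y.val = 2*m) ∨ (x.val = 2*m ∧ y.val = 2*m-1) := by omega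
    rcases hsplit with ⟨hx1, hy1⟩ | ⟨hx1, hy1⟩
    · have hu : u = 0 := by
        rcases hx with ⟨h,h'⟩|⟨h,h'⟩|⟨h1,h2⟩|⟨h,h'⟩|⟨h,h'⟩ <;> first | exact h' | omega
      have hv : v ∉ P := by
        rcases hy with ⟨h,h'⟩|⟨h,h'⟩|⟨h1,h2⟩|⟨h,h'⟩|⟨h,h'⟩ <;> first | exact h' | omega
      exact hv (by rwa [hu, zero_add] at hc2)
    · have hu : u ∉ P := by
        rcases hx with ⟨h,h'⟩|⟨h,h'⟩|⟨h1,h2⟩|⟨h,h'⟩|⟨h,h'⟩ <;> first | exact h' | omega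
      have hv : v = 0 := by
        rcases hy with ⟨h,h'⟩|⟨h,h'⟩|⟨h1,h2⟩|⟨h,h'⟩|⟨h,h'⟩ <;> first | exact h' | omega
      exact hu (by rwa [hv, add_zero] at hc2)

lemma VSModel_ncard {p m d : ℕ} (hm : 2 ≤ m) (hpm : p = 6 * m - 1)
    (P : Set (Fin d → ZMod p)) :
    (VSModel p m d P).ncard = (2*m-1) * p ^ d := by
  haveI : NeZero p := ⟨by omega⟩
  have hval : ∀ k : ℕ, k < p → ((k : ZMod p)).val = k := fun k hk => ZMod.val_cast_of_lt hk
  set A1 : Set (ZMod p × (Fin d → ZMod p)) := {(((2*m-1 : ℕ) : ZMod p), (0 : Fin d → ZMod p))} with hA1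
  set A2 : Set (ZMod p × (Fin d → ZMod p)) := {((2*m : ℕ) : ZMod p)} ×ˢ Pᶜ with hA2
  set A3 : Set (ZMod p × (Fin d → ZMod p)) :=
    (Ival p (2*m+1) (4*m-3)) ×ˢ (Set.univ : Set (Fin d → ZMod p)) with hA3
  set A4 : Set (ZMod p × (Fin d → ZMod p)) :=
    {((4*m-2 : ℕ) : ZMod p)} ×ˢ ({(0 : Fin d → ZMod p)}ᶜ) with hA4
  set A5 : Set (ZMod p × (Fin d → ZMod p)) := {((4*m-1 : ℕ) : ZMod p)} ×ˢ P with hA5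
  have hVS : VSModel p m d P = A1 ∪ A2 ∪ A3 ∪ A4 ∪ A5 := rfl
  have m1 : ∀ z : ZMod p × (Fin d → ZMod p), z ∈ A1 → z.1.val = 2*m-1 := by
    rintro ⟨a, b⟩ h
    rw [hA1, Set.mem_singleton_iff, Prod.ext_iff] at h
    rw [h.1]; exact hval _ (by omega)
  have m2 : ∀ z : ZMod p × (Fin d → ZMod p), z ∈ A2 → z.1.val = 2*m := by
    rintro ⟨a, b⟩ h
    rw [hA2, Set.mem_prod, Set.mem_singleton_iff] at h
    rw [h.1]; exact hval _ (by omega)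
  have m3 : ∀ z : ZMod p × (Fin d → ZMod p), z ∈ A3 → 2*m+1 ≤ z.1.val ∧ z.1.val ≤ 4*m-3 := by
    rintro ⟨a, b⟩ h
    rw [hA3, Set.mem_prod] at h
    obtain ⟨⟨i, hi, rfl⟩, -⟩ := h
    rw [Set.mem_Icc] at hi
    rw [hval i (by omega)]; omega
  have m4 : ∀ z : ZMod p × (Fin d → ZMod p), z ∈ A4 → z.1.val = 4*m-2 := by
    rintro ⟨a, b⟩ h
    rw [hA4, Set.mem_prod, Set.mem_singleton_iff] at h
    rw [h.1]; exact hval _ (by omega)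
  have m5 : ∀ z : ZMod p × (Fin d → ZMod p), z ∈ A5 → z.1.val = 4*m-1 := by
    rintro ⟨a, b⟩ h
    rw [hA5, Set.mem_prod, Set.mem_singleton_iff] at h
    rw [h.1]; exact hval _ (by omega)
  have d12 : Disjoint A1 A2 := Set.disjoint_left.mpr fun z h h' => by
    have := m1 z h; have := m2 z h'; omega
  have d123 : Disjoint (A1 ∪ A2) A3 := Set.disjoint_left.mpr fun z h h' => by
    have := m3 z h'
    rcases h with h | h
    · have := m1 z h; omega
    · have := m2 z h; omega
  have d1234 : Disjoint (A1 ∪ A2 ∪ A3) A4 := Set.disjoint_left.mpr fun z h h' => by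
    have := m4 z h'
    rcases h with (h | h) | h
    · have := m1 z h; omega
    · have := m2 z h; omega
    · have := m3 z h; omega
  have d12345 : Disjoint (A1 ∪ A2 ∪ A3 ∪ A4) A5 := Set.disjoint_left.mpr fun z h h' => by
    have := m5 z h'
    rcases h with ((h | h) | h) | h
    · have := m1 z h; omega
    · have := m2 z h; omega
    · have := m3 z h; omega
    · have := m4 z h; omega
  have hNcard : Nat.card (Fin d → ZMod p) = p ^ d := my_card_pi p d
  have hPle : P.ncard ≤ p ^ d := by
    rw [← hNcard, ← Set.ncard_univ]
    exact Set.ncard_le_ncard (Set.subset_univ P) (Set.toFinite _)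
  have hppos : 1 ≤ p ^ d := Nat.one_le_pow _ _ (by omega)
  have c1 : A1.ncard = 1 := Set.ncard_singleton _
  have c2 : A2.ncard = p ^ d - P.ncard := by
    rw [hA2, my_ncard_prod, Set.ncard_singleton, one_mul]
    have := Set.ncard_add_ncard_compl P (Set.toFinite _) (Set.toFinite _)
    omega
  have c3 : A3.ncard = (2*m-3) * p ^ d := by
    rw [hA3, my_ncard_prod, Set.ncard_univ, hNcard]
    congr 1
    have hIval : (Ival p (2*m+1) (4*m-3)).ncard = (Set.Icc (2*m+1) (4*m-3)).ncard := by
      apply Set.ncard_image_of_injOn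
      intro i hi j hj hij
      rw [Set.mem_Icc] at hi hj
      have : ((i : ZMod p)).val = ((j : ZMod p)).val := congrArg ZMod.val hij
      rwa [hval i (by omega), hval j (by omega)] at this
    rw [hIval, ← Finset.coe_Icc, Set.ncard_coe_finset, Nat.card_Icc]
    omega
  have c4 : A4.ncard = p ^ d - 1 := by
    rw [hA4, my_ncard_prod, Set.ncard_singleton, one_mul]
    have := Set.ncard_add_ncard_compl ({(0 : Fin d → ZMod p)}) (Set.toFinite _) (Set.toFinite _)
    rw [Set.ncard_singleton] at this
    omega
  have c5 : A5.ncard = P.ncard := by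
    rw [hA5, my_ncard_prod, Set.ncard_singleton, one_mul]
  rw [hVS,
    Set.ncard_union_eq d12345 (Set.toFinite _) (Set.toFinite _),
    Set.ncard_union_eq d1234 (Set.toFinite _) (Set.toFinite _),
    Set.ncard_union_eq d123 (Set.toFinite _) (Set.toFinite _),
    Set.ncard_union_eq d12 (Set.toFinite _) (Set.toFinite _),
    c1, c2, c3, c4, c5,
    show (2*m-1) * p ^ d = (2*m-3) * p ^ d + 2 * p ^ d by
      rw [show 2*m-1 = 2*m-3+2 from by omega, add_mul]]
  generalize (2*m-3) * p ^ d = t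
  omega

end AuxLemmas

/-- for a prime `p = 6m-1 ≥ 11` and `n ≥ 1`, every structured `A ⊆ 𝔽_p^n`
is sum-free of size `(2m-1)·p^{n-1}`. -/
theorem stmt_7 (p m n : ℕ) (hp : p.Prime) (hp11 : 11 ≤ p) (hpm : p = 6 * m - 1)
    (hn : 1 ≤ n) (A : Set (Fin n → ZMod p)) (hA : IsStructured p m n A) :
    IsSumFree A ∧ A.ncard = (2 * m - 1) * p ^ (n - 1) := by
  have hm : 2 ≤ m := by omega
  haveI : NeZero p := ⟨by omega⟩
  obtain ⟨ℓ, hℓ1, hℓn, B, ⟨P, hP, hB⟩, hAB⟩ := hA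
  have hB_sf : IsSumFree B := my_isSumFree_of_isoSets hB (VSModel_isSumFree hm hpm hP)
  have hB_card : B.ncard = (2*m-1) * p ^ (ℓ-1) :=
    (my_ncard_of_isoSets hB).trans (VSModel_ncard hm hpm P)
  have hprod_sf : IsSumFree (B ×ˢ (Set.univ : Set (Fin (n-ℓ) → ZMod p))) := by
    rintro ⟨x, u⟩ hx ⟨y, v⟩ hy hxy
    exact hB_sf x hx.1 y hy.1 hxy.1
  refine ⟨my_isSumFree_of_isoSets hAB hprod_sf, ?_⟩
  rw [my_ncard_of_isoSets hAB, my_ncard_prod, hB_card, Set.ncard_univ, my_card_pi,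
    mul_assoc, ← pow_add, show ℓ - 1 + (n - ℓ) = n - 1 from by omega]
end

section
/- Let p = 6m−1 ≥ 11 be prime and n ≥ 1. If A ⊆ 𝔽_p^n is structured, then there is no set B isomorphic to the cuboid [(p+1)/3, (2p−1)/3] × 𝔽_p^{n−1} with A ⊆ B; that is, no member of SF̃₀(𝔽_p^n) covers A. -/
open Pointwise

/-- for a prime `p = 6m-1 ≥ 11` and `n ≥ 1`, no structured `A ⊆ 𝔽_p^n`
is covered by a set isomorphic to the cuboid `[(p+1)/3, (2p-1)/3] × 𝔽_p^{n-1}`. -/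
theorem stmt_8 (p m n : ℕ) (hp : p.Prime) (hp11 : 11 ≤ p) (hpm : p = 6 * m - 1)
    (hn : 1 ≤ n) (A : Set (Fin n → ZMod p)) (hA : IsStructured p m n A) :
    ¬ ∃ B : Set (Fin n → ZMod p),
        IsoSets B ((Ival p ((p + 1) / 3) ((2 * p - 1) / 3)) ×ˢ
          (Set.univ : Set (Fin (n - 1) → ZMod p))) ∧ A ⊆ B := by
  rintro ⟨B', ⟨e₃, he₃⟩, hAB'⟩
  obtain ⟨ℓ, hℓ1, hℓn, B, ⟨P, hP, e₁, he₁⟩, e₂, he₂⟩ := hA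
  have hm : 2 ≤ m := by omega
  haveI : NeZero p := ⟨by omega⟩
  haveI : Fact p.Prime := ⟨hp⟩
  have hd1 : (p + 1) / 3 = 2 * m := by omega
  have hd2 : (2 * p - 1) / 3 = 4 * m - 1 := by omega
  rw [hd1, hd2] at he₃
  -- basic facts about I := Ival p (2m) (4m-1)
  have hcast : ∀ i j : ℕ, i < p → j < p → ((i : ZMod p) = (j : ZMod p)) → i = j := by
    intro i j hi hj h
    have := (ZMod.natCast_eq_natCast_iff i j p).mp h
    unfold Nat.ModEq at this
    rwa [Nat.mod_eq_of_lt hi, Nat.mod_eq_of_lt hj] at this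
  have hIsf : ∀ x ∈ Ival p (2*m) (4*m-1), ∀ y ∈ Ival p (2*m) (4*m-1),
      x + y ∉ Ival p (2*m) (4*m-1) := by
    rintro x ⟨i, ⟨hi1, hi2⟩, rfl⟩ y ⟨j, ⟨hj1, hj2⟩, rfl⟩ ⟨k, ⟨hk1, hk2⟩, hk⟩
    rw [← Nat.cast_add] at hk
    have hk' : ((i+j : ℕ) : ZMod p) = ((k:ℕ) : ZMod p) := hk.symm
    have hmod := (ZMod.natCast_eq_natCast_iff k (i+j) p).mp hk'.symm
    have hdvd := (Nat.modEq_iff_dvd' (by omega)).mp hmod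
    have := Nat.le_of_dvd (by omega) hdvd
    omega
  have h0I : (0 : ZMod p) ∉ Ival p (2*m) (4*m-1) := by
    rintro ⟨i, ⟨hi1, hi2⟩, hi⟩
    have := (ZMod.natCast_eq_zero_iff i p).mp hi
    have := Nat.le_of_dvd (by omega) this
    omega
  -- the composed homomorphism
  set F : ((ZMod p × (Fin (ℓ-1) → ZMod p)) × (Fin (n-ℓ) → ZMod p)) →+ ZMod p :=
    (AddMonoidHom.fst (ZMod p) (Fin (n-1) → ZMod p)).comp
      ((e₃.toAddMonoidHom.comp e₂.symm.toAddMonoidHom).comp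
        ((AddEquiv.prodCongr e₁ (AddEquiv.refl (Fin (n-ℓ) → ZMod p))).symm.toAddMonoidHom))
    with hF
  have hV : ∀ v ∈ VSModel p m (ℓ-1) P, ∀ z : Fin (n-ℓ) → ZMod p,
      F (v, z) ∈ Ival p (2*m) (4*m-1) := by
    intro v hv z
    rw [← he₁] at hv
    obtain ⟨b, hbB, rfl⟩ := hv
    have hbz : (b, z) ∈ B ×ˢ (Set.univ : Set (Fin (n-ℓ) → ZMod p)) := ⟨hbB, trivial⟩
    rw [← he₂] at hbz
    obtain ⟨x, hxA, hx⟩ := hbz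
    have hxB' : x ∈ B' := hAB' hxA
    have : e₃ x ∈ (Ival p (2*m) (4*m-1)) ×ˢ (Set.univ : Set (Fin (n-1) → ZMod p)) := by
      rw [← he₃]; exact ⟨x, hxB', rfl⟩
    have hfst : (e₃ x).1 ∈ Ival p (2*m) (4*m-1) := this.1
    have heq : F (e₁ b, z) = (e₃ x).1 := by
      have h4 : (AddEquiv.prodCongr e₁ (AddEquiv.refl (Fin (n-ℓ) → ZMod p))).symm
          (e₁ b, z) = (b, z) := by
        simp [AddEquiv.prodCongr]
      have h2 : e₂.symm (b, z) = x := by rw [← hx]; exact e₂.symm_apply_apply x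
      simp [hF, AddMonoidHom.comp_apply, h4, h2]
    rw [heq]; exact hfst
  set a : ZMod p := F ((1, 0), 0) with ha
  -- F at the special points
  have hFj : ∀ j : ℕ, F (((j : ZMod p), 0), 0) = (j : ZMod p) * a := by
    intro j
    have hpt : ((((j : ℕ) : ZMod p), (0 : Fin (ℓ-1) → ZMod p)),
        (0 : Fin (n-ℓ) → ZMod p)) = j • (((1 : ZMod p), 0), 0) := by
      simp [Prod.smul_def, nsmul_eq_mul]
    rw [hpt, map_nsmul, nsmul_eq_mul]
  have h0P : (0 : Fin (ℓ-1) → ZMod p) ∉ P := by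
    intro h
    exact hP (by simpa using Set.add_mem_add h h)
  have hK : ∀ j : ℕ, 2*m-1 ≤ j → j ≤ 4*m-3 → (j : ZMod p) * a ∈ Ival p (2*m) (4*m-1) := by
    intro j hj1 hj2
    rw [← hFj]
    have hmem : (((j : ℕ) : ZMod p), (0 : Fin (ℓ-1) → ZMod p)) ∈ VSModel p m (ℓ-1) P := by
      rcases Nat.lt_or_ge j (2*m) with hj | hj
      · have : j = 2*m-1 := by omega
        subst this
        exact Or.inl (Or.inl (Or.inl (Or.inl rfl)))
      · rcases Nat.lt_or_ge j (2*m+1) with hj' | hj'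
        · have : j = 2*m := by omega
          subst this
          exact Or.inl (Or.inl (Or.inl (Or.inr ⟨rfl, h0P⟩)))
        · exact Or.inl (Or.inl (Or.inr ⟨⟨j, ⟨hj', hj2⟩, rfl⟩, trivial⟩))
    exact hV _ hmem 0
  have ha0 : a ≠ 0 := by
    intro h
    have := hK (2*m-1) le_rfl (by omega)
    rw [h, mul_zero] at this
    exact h0I this
  -- the set S
  set S : Set (ZMod p) := {x | x * a ∈ Ival p (2*m) (4*m-1)} with hSdef
  have hSsf : ∀ x ∈ S, ∀ y ∈ S, x + y ∉ S := by
    intro x hx y hy hxy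
    have h' : (x + y) * a ∈ Ival p (2*m) (4*m-1) := hxy
    rw [add_mul] at h'
    exact hIsf _ hx _ hy h'
  have hKS : ∀ j : ℕ, 2*m-1 ≤ j → j ≤ 4*m-3 → (j : ZMod p) ∈ S := hK
  -- cardinality: S has an element outside K'
  set K' : Set (ZMod p) := (fun i : ℕ => (i : ZMod p)) '' Set.Icc (2*m-1) (4*m-3) with hK'
  have hKS' : K' ⊆ S := by rintro x ⟨j, ⟨hj1, hj2⟩, rfl⟩; exact hKS j hj1 hj2
  have hSeq : S = (fun x : ZMod p => x * a⁻¹) '' (Ival p (2*m) (4*m-1)) := by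
    ext x
    constructor
    · intro hx
      exact ⟨x * a, hx, by show x * a * a⁻¹ = x; rw [mul_assoc, mul_inv_cancel₀ ha0, mul_one]⟩
    · rintro ⟨y, hy, rfl⟩
      show y * a⁻¹ * a ∈ Ival p (2*m) (4*m-1)
      rwa [mul_assoc, inv_mul_cancel₀ ha0, mul_one]
  have hIcard : (Ival p (2*m) (4*m-1)).ncard = 2*m := by
    rw [Ival, Set.ncard_image_of_injOn, ← Finset.coe_Icc, Set.ncard_coe_finset,
      Nat.card_Icc]
    · omega
    · rintro i ⟨hi1, hi2⟩ j ⟨hj1, hj2⟩ h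
      exact hcast i j (by omega) (by omega) h
  have hScard : S.ncard = 2*m := by
    rw [hSeq]
    exact (Set.ncard_image_of_injective _ (mul_left_injective₀ (inv_ne_zero ha0))).trans hIcard
  have hK'card : K'.ncard = 2*m-1 := by
    rw [hK', Set.ncard_image_of_injOn, ← Finset.coe_Icc, Set.ncard_coe_finset,
      Nat.card_Icc]
    · omega
    · rintro i ⟨hi1, hi2⟩ j ⟨hj1, hj2⟩ h
      exact hcast i j (by omega) (by omega) h
  have hnsub : ¬ S ⊆ K' := by
    intro hsub
    have := Set.ncard_le_ncard hsub (Set.toFinite K')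
    omega
  obtain ⟨s₀, hs₀S, hs₀K⟩ := Set.not_subset.mp hnsub
  -- write s₀ as a cast
  set j₀ : ℕ := s₀.val with hj₀
  have hj₀p : j₀ < p := ZMod.val_lt s₀
  have hs₀ : (j₀ : ZMod p) = s₀ := ZMod.natCast_rightInverse s₀
  have hj₀K : ¬ (2*m-1 ≤ j₀ ∧ j₀ ≤ 4*m-3) := by
    intro ⟨h1, h2⟩
    exact hs₀K ⟨j₀, ⟨h1, h2⟩, hs₀⟩
  rcases Nat.lt_or_ge j₀ (2*m-1) with hc | hc
  · -- small case: s₀ + (2m-1) lands in K'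
    have h1 : ((2*m-1 : ℕ) : ZMod p) ∈ S := hKS _ le_rfl (by omega)
    have h2 : s₀ + ((2*m-1 : ℕ) : ZMod p) ∈ S := by
      have : s₀ + ((2*m-1 : ℕ) : ZMod p) = ((j₀ + (2*m-1) : ℕ) : ZMod p) := by
        rw [Nat.cast_add, hs₀]
      rw [this]
      exact hKS _ (by omega) (by omega)
    exact hSsf s₀ hs₀S _ h1 h2
  · -- large case: s₀ is a sum of two elements of K'
    have hc2 : 4*m-2 ≤ j₀ := by omega
    set t : ℕ := max (2*m-1) (j₀ - (4*m-3)) with ht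
    set s : ℕ := j₀ - t with hs
    have htb : 2*m-1 ≤ t ∧ t ≤ 4*m-3 ∧ 2*m-1 ≤ s ∧ s ≤ 4*m-3 ∧ t + s = j₀ := by
      omega
    have h1 : ((t : ℕ) : ZMod p) ∈ S := hKS t htb.1 htb.2.1
    have h2 : ((s : ℕ) : ZMod p) ∈ S := hKS s htb.2.2.1 htb.2.2.2.1
    have h3 : ((t : ℕ) : ZMod p) + ((s : ℕ) : ZMod p) = s₀ := by
      rw [← Nat.cast_add, htb.2.2.2.2, hs₀]
    exact hSsf _ h1 _ h2 (h3 ▸ hs₀S)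
end

section
/- If A is a sum-free subset of a nontrivial finite abelian group G, then there exists a non-trivial character γ of G (a homomorphism from G to the unit circle in ℂ, γ not identically 1) such that Re Â(γ) ≤ −|A|²/(|G| − |A|), where Â(γ) = Σ_{x ∈ A} conj(γ(x)). -/
open Pointwise

/-- every sum-free subset `A` of a nontrivial finite abelian group `G`
admits a nontrivial character `γ` with `Re Â(γ) ≤ -|A|²/(|G| - |A|)`. -/
theorem stmt_14 (G : Type*) [AddCommGroup G] [Fintype G] [Nontrivial G]
    (A : Set G) (hA : IsSumFree A) :
    ∃ γ : G → ℂ,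
      (∀ x y : G, γ (x + y) = γ x * γ y) ∧
      (∀ x : G, ‖γ x‖ = 1) ∧
      (∃ x : G, γ x ≠ 1) ∧
      (∑ x ∈ A.toFinite.toFinset, (starRingEnd ℂ) (γ x)).re ≤
        -(A.ncard : ℝ) ^ 2 / ((Fintype.card G : ℝ) - A.ncard) := by
    classical
  set F := A.toFinite.toFinset with hFdef
  have hmem : ∀ x : G, x ∈ F ↔ x ∈ A := fun x => A.toFinite.mem_toFinset
  have hncard : A.ncard = F.card := Set.ncard_eq_toFinset_card A A.toFinite
  set N := Fintype.card G with hN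
  set n := F.card with hn
  have h0A : (0 : G) ∉ A := fun h => hA 0 h 0 h (by simpa using h)
  have hnN : n < N := by
    refine Finset.card_lt_card ?_
    rw [Finset.ssubset_univ_iff]
    intro h
    exact h0A ((hmem 0).1 (h ▸ Finset.mem_univ 0))
  have hNn : (0 : ℝ) < (N : ℝ) - n := by
    have := (Nat.cast_lt (α := ℝ)).2 hnN
    linarith
  -- case n = 0
  rcases Nat.eq_zero_or_pos n with hn0 | hnpos
  · obtain ⟨a, ha⟩ := exists_ne (0 : G)
    obtain ⟨ψ, hψ⟩ := AddChar.exists_apply_ne_zero.2 ha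
    refine ⟨⇑ψ, fun x y => ψ.map_add_eq_mul x y, fun x => by
      exact AddChar.norm_apply ψ x, ⟨a, hψ⟩, ?_⟩
    have hFempty : F = ∅ := Finset.card_eq_zero.1 hn0
    rw [hFempty]
    simp [hncard, hn0]
  -- main case
  set T : AddChar G ℂ → ℂ := fun ψ => ∑ x ∈ F, ψ x with hT
  have orth : ∀ a : G, ∑ ψ : AddChar G ℂ, ψ a = if a = 0 then (N : ℂ) else 0 :=
    fun a => AddChar.sum_apply_eq_ite a
  have conjT : ∀ ψ : AddChar G ℂ, (starRingEnd ℂ) (T ψ) = ∑ z ∈ F, ψ (-z) := by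
    intro ψ
    rw [hT, map_sum]
    exact Finset.sum_congr rfl fun z _ => (AddChar.map_neg_eq_conj ψ z).symm
  have expand : ∀ ψ : AddChar G ℂ,
      T ψ * T ψ * (starRingEnd ℂ) (T ψ) = ∑ x ∈ F, ∑ y ∈ F, ∑ z ∈ F, ψ (x + y + -z) := by
    intro ψ
    rw [conjT, hT, Finset.sum_mul_sum, Finset.sum_mul]
    refine Finset.sum_congr rfl fun x _ => ?_
    rw [Finset.sum_mul]
    refine Finset.sum_congr rfl fun y _ => ?_
    rw [Finset.mul_sum]
    refine Finset.sum_congr rfl fun z _ => ?_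
    rw [← ψ.map_add_eq_mul, ← ψ.map_add_eq_mul]
  have E1 : ∑ ψ : AddChar G ℂ, T ψ * T ψ * (starRingEnd ℂ) (T ψ) = 0 := by
    calc ∑ ψ : AddChar G ℂ, T ψ * T ψ * (starRingEnd ℂ) (T ψ)
        = ∑ ψ : AddChar G ℂ, ∑ x ∈ F, ∑ y ∈ F, ∑ z ∈ F, ψ (x + y + -z) :=
          Finset.sum_congr rfl fun ψ _ => expand ψ
      _ = ∑ x ∈ F, ∑ y ∈ F, ∑ z ∈ F, ∑ ψ : AddChar G ℂ, ψ (x + y + -z) := by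
          rw [Finset.sum_comm]
          refine Finset.sum_congr rfl fun x _ => ?_
          rw [Finset.sum_comm]
          refine Finset.sum_congr rfl fun y _ => ?_
          rw [Finset.sum_comm]
      _ = 0 := by
          refine Finset.sum_eq_zero fun x hx => Finset.sum_eq_zero fun y hy =>
            Finset.sum_eq_zero fun z hz => ?_
          rw [orth, if_neg]
          intro h
          have hxyz : x + y = z := by
            have := add_eq_zero_iff_eq_neg.1 h
            rw [this]; simp
          exact hA x ((hmem x).1 hx) y ((hmem y).1 hy) (hxyz ▸ (hmem z).1 hz)
  have E2 : ∑ ψ : AddChar G ℂ, T ψ * (starRingEnd ℂ) (T ψ) = (N : ℂ) * n := by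
    calc ∑ ψ : AddChar G ℂ, T ψ * (starRingEnd ℂ) (T ψ)
        = ∑ ψ : AddChar G ℂ, ∑ x ∈ F, ∑ z ∈ F, ψ (x + -z) := by
          refine Finset.sum_congr rfl fun ψ _ => ?_
          rw [conjT, hT, Finset.sum_mul]
          refine Finset.sum_congr rfl fun x _ => ?_
          rw [Finset.mul_sum]
          exact Finset.sum_congr rfl fun z _ => (ψ.map_add_eq_mul x (-z)).symm
      _ = ∑ x ∈ F, ∑ z ∈ F, ∑ ψ : AddChar G ℂ, ψ (x + -z) := by
          rw [Finset.sum_comm]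
          exact Finset.sum_congr rfl fun x _ => Finset.sum_comm
      _ = ∑ x ∈ F, ∑ z ∈ F, if x = z then (N : ℂ) else 0 := by
          refine Finset.sum_congr rfl fun x _ => Finset.sum_congr rfl fun z _ => ?_
          rw [orth]
          congr 1
          simp [sub_eq_zero, add_neg_eq_zero]
      _ = (N : ℂ) * n := by
          rw [Finset.sum_congr rfl fun x hx => Finset.sum_ite_eq F x (fun _ => (N : ℂ))]
          simp [hn, mul_comm]
  -- real versions
  have cube : ∀ ψ : AddChar G ℂ,
      (T ψ * T ψ * (starRingEnd ℂ) (T ψ)).re = Complex.normSq (T ψ) * (T ψ).re := by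
    intro ψ
    have : T ψ * T ψ * (starRingEnd ℂ) (T ψ) = (Complex.normSq (T ψ) : ℂ) * T ψ := by
      rw [mul_assoc, Complex.mul_conj, mul_comm]
    rw [this]
    simp
  have sq : ∀ ψ : AddChar G ℂ, (T ψ * (starRingEnd ℂ) (T ψ)).re = Complex.normSq (T ψ) := by
    intro ψ; rw [Complex.mul_conj]; simp
  have R1 : ∑ ψ : AddChar G ℂ, Complex.normSq (T ψ) * (T ψ).re = 0 := by
    have := congrArg Complex.re E1
    rw [Complex.re_sum] at this
    simpa [cube] using this
  have R2 : ∑ ψ : AddChar G ℂ, Complex.normSq (T ψ) = (N : ℝ) * n := by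
    have := congrArg Complex.re E2
    rw [Complex.re_sum] at this
    simpa [sq] using this
  -- split off trivial character
  have hT1 : T 1 = (n : ℂ) := by rw [hT]; simp [hn]
  have split1 : ∑ ψ ∈ Finset.univ.erase (1 : AddChar G ℂ), Complex.normSq (T ψ) * (T ψ).re
      = -((n : ℝ) ^ 3) := by
    have this : Complex.normSq (T 1) * (T 1).re
        + ∑ ψ ∈ Finset.univ.erase (1 : AddChar G ℂ), Complex.normSq (T ψ) * (T ψ).re = 0 := by
      rw [← R1]
      exact Finset.add_sum_erase Finset.univ (fun ψ => Complex.normSq (T ψ) * (T ψ).re)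
        (Finset.mem_univ (1 : AddChar G ℂ))
    have h1 : Complex.normSq (T 1) * (T 1).re = (n : ℝ) ^ 3 := by
      rw [hT1]; simp [Complex.normSq]; ring
    linarith [this, h1]
  have split2 : ∑ ψ ∈ Finset.univ.erase (1 : AddChar G ℂ), Complex.normSq (T ψ)
      = (n : ℝ) * ((N : ℝ) - n) := by
    have this : Complex.normSq (T 1)
        + ∑ ψ ∈ Finset.univ.erase (1 : AddChar G ℂ), Complex.normSq (T ψ) = (N : ℝ) * n := by
      rw [← R2]
      exact Finset.add_sum_erase Finset.univ (fun ψ => Complex.normSq (T ψ))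
        (Finset.mem_univ (1 : AddChar G ℂ))
    have h1 : Complex.normSq (T 1) = (n : ℝ) ^ 2 := by
      rw [hT1]; simp [Complex.normSq]; ring
    have := this
    nlinarith [this, h1]
  set c : ℝ := (n : ℝ) ^ 2 / ((N : ℝ) - n) with hc
  have hcval : c * ((n : ℝ) * ((N : ℝ) - n)) = (n : ℝ) ^ 3 := by
    rw [hc, div_mul_eq_mul_div, div_eq_iff hNn.ne']
    ring
  -- exists ψ ≠ 1 with (T ψ).re ≤ -c
  have key : ∃ ψ : AddChar G ℂ, ψ ≠ 1 ∧ (T ψ).re ≤ -c := by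
    by_contra hcon
    push_neg at hcon
    have hterm : ∀ ψ ∈ Finset.univ.erase (1 : AddChar G ℂ),
        0 ≤ Complex.normSq (T ψ) * ((T ψ).re + c) := by
      intro ψ hψ
      have h1 := hcon ψ (Finset.ne_of_mem_erase hψ)
      nlinarith [Complex.normSq_nonneg (T ψ)]
    have hsum : ∑ ψ ∈ Finset.univ.erase (1 : AddChar G ℂ),
        Complex.normSq (T ψ) * ((T ψ).re + c) = 0 := by
      have expand2 : ∑ ψ ∈ Finset.univ.erase (1 : AddChar G ℂ),
          Complex.normSq (T ψ) * ((T ψ).re + c)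
          = (∑ ψ ∈ Finset.univ.erase (1 : AddChar G ℂ), Complex.normSq (T ψ) * (T ψ).re)
            + c * ∑ ψ ∈ Finset.univ.erase (1 : AddChar G ℂ), Complex.normSq (T ψ) := by
        rw [Finset.mul_sum, ← Finset.sum_add_distrib]
        exact Finset.sum_congr rfl fun ψ _ => by ring
      rw [expand2, split1, split2, hcval]
      ring
    have hzero : ∀ ψ ∈ Finset.univ.erase (1 : AddChar G ℂ),
        Complex.normSq (T ψ) * ((T ψ).re + c) = 0 :=
      (Finset.sum_eq_zero_iff_of_nonneg hterm).1 hsum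
    have hnsq : ∀ ψ ∈ Finset.univ.erase (1 : AddChar G ℂ), Complex.normSq (T ψ) = 0 := by
      intro ψ hψ
      have h1 := hcon ψ (Finset.ne_of_mem_erase hψ)
      have h2 := hzero ψ hψ
      rcases mul_eq_zero.1 h2 with h | h
      · exact h
      · exfalso; linarith
    have : (n : ℝ) * ((N : ℝ) - n) = 0 := by
      rw [← split2]
      exact Finset.sum_eq_zero hnsq
    have hnpos' : (0 : ℝ) < n := by exact_mod_cast hnpos
    nlinarith
  obtain ⟨ψ, hψ1, hψ2⟩ := key
  refine ⟨⇑ψ, fun x y => ψ.map_add_eq_mul x y, fun x => by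
    exact AddChar.norm_apply ψ x, ?_, ?_⟩
  · by_contra h
    push_neg at h
    exact hψ1 (DFunLike.ext ψ 1 fun x => by simpa using h x)
  · have hre : (∑ x ∈ A.toFinite.toFinset, (starRingEnd ℂ) (ψ x)).re = (T ψ).re := by
      have : ∑ x ∈ A.toFinite.toFinset, (starRingEnd ℂ) (ψ x)
          = (starRingEnd ℂ) (T ψ) := by rw [hT, map_sum]
      rw [this, Complex.conj_re]
    rw [hre, hncard]
    calc (T ψ).re ≤ -c := hψ2
      _ = -(n : ℝ) ^ 2 / ((N : ℝ) - n) := by rw [hc, neg_div]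
end

section
/- Suppose n ≥ 2 and A_0, …, A_10 are subsets of 𝔽_11^{n−1} of which at most two are empty, and suppose A = ⋃_{k ∈ 𝔽_11} {k} × A_k is a sum-free subset of 𝔽_11^n. Set α_i = |A_i|/11^{n−2} for i ∈ 𝔽_11. Then for all distinct nonzero i, j ∈ 𝔽_11 one has α_i + α_j ≤ 11, and if additionally i + j ≠ 0 then α_i + α_j + α_{i+j} ≤ 12. -/
open Pointwise

section KneserLite2
open Finset

section KneserLite

private lemma mk'_eq_iff {G : Type*} [AddCommGroup G] (K : AddSubgroup G) (x y : G) :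
    QuotientAddGroup.mk' K x = QuotientAddGroup.mk' K y ↔ x - y ∈ K := by
  rw [QuotientAddGroup.mk'_eq_mk']
  constructor
  · rintro ⟨z, hz, rfl⟩; simpa using neg_mem hz
  · intro h; exact ⟨y - x, by simpa using neg_mem h, by abel⟩

variable {G : Type*} [AddCommGroup G] [Fintype G] [DecidableEq G]

private lemma card_filter_mk'_eq (K : AddSubgroup G) [DecidableEq (G ⧸ K)] (q : G ⧸ K) :
    (Finset.univ.filter (fun x : G => QuotientAddGroup.mk' K x = q)).card = Nat.card K := by
  classical
  obtain ⟨x0, rfl⟩ := QuotientAddGroup.mk'_surjective K q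
  have h1 : Finset.univ.filter
        (fun x : G => QuotientAddGroup.mk' K x = QuotientAddGroup.mk' K x0)
      = (Finset.univ.filter (fun x : G => x ∈ K)).image (x0 + ·) := by
    ext x
    simp only [mem_filter, mem_univ, true_and, mem_image, mk'_eq_iff]
    constructor
    · intro h
      exact ⟨x - x0, h, by abel⟩
    · rintro ⟨k, hk, rfl⟩
      simpa [add_sub_cancel_left] using hk
  rw [h1, Finset.card_image_of_injective _ (add_right_injective x0),
    Nat.card_eq_fintype_card, Fintype.card_subtype]

private lemma card_of_periodic (K : AddSubgroup G) [DecidableEq (G ⧸ K)] (S : Finset G)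
    (hper : ∀ g ∈ K, ∀ a ∈ S, a + g ∈ S) :
    S.card = (S.image (QuotientAddGroup.mk' K)).card * Nat.card K := by
  rw [Finset.card_eq_sum_card_fiberwise
    (f := QuotientAddGroup.mk' K) (t := S.image (QuotientAddGroup.mk' K))
    (fun x hx => Finset.mem_image_of_mem _ hx)]
  rw [Finset.sum_congr rfl (fun q hq => ?_), Finset.sum_const, smul_eq_mul]
  obtain ⟨a0, ha0S, ha0⟩ := Finset.mem_image.mp hq
  rw [← card_filter_mk'_eq K q]
  congr 1
  ext x
  simp only [mem_filter, mem_univ, true_and, and_iff_right_iff_imp]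
  intro hx
  have hk : x - a0 ∈ K := by
    rw [← mk'_eq_iff]
    rw [hx, ha0]
  have := hper _ hk a0 ha0S
  simpa [add_sub_cancel] using this

private lemma card_le_image_mul_s15 (K : AddSubgroup G) [DecidableEq (G ⧸ K)] (S : Finset G) :
    S.card ≤ (S.image (QuotientAddGroup.mk' K)).card * Nat.card K := by
  rw [Finset.card_eq_sum_card_fiberwise
    (f := QuotientAddGroup.mk' K) (t := S.image (QuotientAddGroup.mk' K))
    (fun x hx => Finset.mem_image_of_mem _ hx)]
  calc ∑ q ∈ S.image (QuotientAddGroup.mk' K),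
        (S.filter (fun x => QuotientAddGroup.mk' K x = q)).card
      ≤ ∑ q ∈ S.image (QuotientAddGroup.mk' K), Nat.card K := by
        refine Finset.sum_le_sum fun q _ => ?_
        rw [← card_filter_mk'_eq K q]
        exact Finset.card_le_card (Finset.filter_subset_filter _ (Finset.subset_univ S))
    _ = _ := by rw [Finset.sum_const, smul_eq_mul]

end KneserLite

private theorem kneser_lite : ∀ (N : ℕ) (G : Type) [AddCommGroup G] [Fintype G] [DecidableEq G],
    Fintype.card G ≤ N → ∀ (n : ℕ) (A B : Finset G), B.card ≤ n → A.Nonempty → B.Nonempty →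
    A + B = Finset.univ ∨
      ∃ H : AddSubgroup G, H ≠ ⊤ ∧ A.card + B.card ≤ (A + B).card + Nat.card H := by
  intro N
  induction N with
  | zero =>
    intro G _ _ _ hG
    have : (0 : ℕ) < Fintype.card G := @Fintype.card_pos G _ ⟨0⟩
    omega
  | succ N ihN =>
    intro G _ _ _ hG n
    induction n with
    | zero =>
      intro A B hBc hA hB
      have := hB.card_pos
      omega
    | succ n ihn =>
      intro A B hBcard hA hB
      rcases eq_or_lt_of_le (show 1 ≤ B.card from hB.card_pos) with h1 | h2
      · -- B is a singleton
        obtain ⟨y, rfl⟩ := Finset.card_eq_one.mp h1.symm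
        have hAy : A + {y} = A.image (· + y) := by
          ext x
          simp only [Finset.mem_add, Finset.mem_singleton, Finset.mem_image]
          constructor
          · rintro ⟨u, hu, v, rfl, rfl⟩; exact ⟨u, hu, rfl⟩
          · rintro ⟨u, hu, rfl⟩; exact ⟨u, hu, y, rfl, rfl⟩
        have hcardA : (A + {y}).card = A.card := by
          rw [hAy, Finset.card_image_of_injective _ (add_left_injective y)]
        by_cases hcard : Fintype.card G = 1
        · left
          apply Finset.eq_univ_of_card
          have h3 : 1 ≤ (A + {y}).card := by
            have : (A + {y}).Nonempty := hA.add ⟨y, Finset.mem_singleton_self y⟩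
            exact this.card_pos
          have h4 : (A + {y}).card ≤ Fintype.card G := Finset.card_le_univ _
          omega
        · right
          refine ⟨⊥, ?_, ?_⟩
          · intro hbt
            apply hcard
            have h2 := congrArg (fun H : AddSubgroup G => Nat.card H) hbt
            simp only [AddSubgroup.card_bot] at h2
            have h3 : Nat.card (⊤ : AddSubgroup G) = Nat.card G :=
              Nat.card_congr AddSubgroup.topEquiv.toEquiv
            rw [← Nat.card_eq_fintype_card]
            omega
          · simp [hcardA, AddSubgroup.card_bot]
      · obtain ⟨b1, hb1, b2, hb2, hbne⟩ := Finset.one_lt_card.mp h2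
        by_cases hstuck : ∀ a ∈ A, ∀ b ∈ B, ∀ b' ∈ B, b' + (a - b) ∈ A
        · -- periodic case
          have hδ : ∀ a ∈ A, a + (b2 - b1) ∈ A := fun a ha => by
            have := hstuck a ha b1 hb1 b2 hb2
            have e : b2 + (a - b1) = a + (b2 - b1) := by abel
            rwa [e] at this
          set K := AddSubgroup.closure {b2 - b1} with hKdef
          have himg : A.image (· + (b2 - b1)) = A := by
            apply Finset.eq_of_subset_of_card_le
            · intro x hx
              obtain ⟨a, ha, rfl⟩ := Finset.mem_image.mp hx
              exact hδ a ha
            · rw [Finset.card_image_of_injective _ (add_left_injective _)]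
          have stab_zero : A.image (· + (0:G)) = A := by simp
          have stab_add : ∀ x y : G, A.image (· + x) = A → A.image (· + y) = A →
              A.image (· + (x + y)) = A := by
            intro x y hx hy
            have : (A.image (· + x)).image (· + y) = A.image (· + (x + y)) := by
              rw [Finset.image_image]
              exact Finset.image_congr (fun a _ => by simp [Function.comp, add_assoc])
            rw [← this, hx, hy]
          have stab_neg : ∀ x : G, A.image (· + x) = A → A.image (· + (-x)) = A := by
            intro x hx
            have h1 : (A.image (· + x)).image (· + (-x)) = A := by
              rw [Finset.image_image]
              have : A.image ((· + (-x)) ∘ (· + x)) = A.image id := by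
                exact Finset.image_congr (fun a _ => by simp)
              rw [this, Finset.image_id]
            rw [hx] at h1
            exact h1
          have hKstab : ∀ g ∈ K, A.image (· + g) = A := by
            intro g hg
            induction hg using AddSubgroup.closure_induction with
            | mem x hx => simpa [Set.mem_singleton_iff.mp hx] using himg
            | zero => exact stab_zero
            | add x y _ _ hx hy => exact stab_add x y hx hy
            | neg x _ hx => exact stab_neg x hx
          have hper : ∀ g ∈ K, ∀ a ∈ A, a + g ∈ A := by
            intro g hg a ha
            rw [← hKstab g hg]
            exact Finset.mem_image_of_mem _ ha
          by_cases hK : K = ⊤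
          · left
            have hAuniv : A = Finset.univ := by
              obtain ⟨a0, ha0⟩ := hA
              apply Finset.eq_univ_of_forall
              intro x
              have : a0 + (x - a0) ∈ A := hper _ (hK ▸ AddSubgroup.mem_top _) a0 ha0
              simpa [add_sub_cancel] using this
            apply Finset.eq_univ_of_forall
            intro x
            rw [Finset.mem_add]
            exact ⟨x - b1, by simp [hAuniv], b1, hb1, by abel⟩
          · -- quotient case
            classical
            have hKne : (1 : ℕ) < Nat.card K := by
              have hmem : b2 - b1 ∈ K := AddSubgroup.subset_closure rfl
              have hne : b2 - b1 ≠ 0 := sub_ne_zero.mpr hbne.symm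
              by_contra hle
              push_neg at hle
              have hbot : K = ⊥ := AddSubgroup.eq_bot_of_card_le K hle
              rw [hbot] at hmem
              exact hne (AddSubgroup.mem_bot.mp hmem)
            letI : Fintype (G ⧸ K) := Fintype.ofFinite _
            letI : DecidableEq (G ⧸ K) := Classical.decEq _
            set π := QuotientAddGroup.mk' K with hπdef
            have hcardGQ : Fintype.card G = Fintype.card (G ⧸ K) * Nat.card K := by
              have := AddSubgroup.card_eq_card_quotient_mul_card_addSubgroup K
              simpa [Nat.card_eq_fintype_card] using this
            have hQpos : 0 < Fintype.card (G ⧸ K) := @Fintype.card_pos _ _ ⟨(0 : G ⧸ K)⟩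
            have hQlt : Fintype.card (G ⧸ K) < Fintype.card G := by
              calc Fintype.card (G ⧸ K)
                  < Fintype.card (G ⧸ K) * Nat.card K := (lt_mul_iff_one_lt_right hQpos).mpr hKne
                _ = Fintype.card G := hcardGQ.symm
            have hQle : Fintype.card (G ⧸ K) ≤ N := by omega
            have hABper : ∀ g ∈ K, ∀ x ∈ A + B, x + g ∈ A + B := by
              intro g hg x hx
              rw [Finset.mem_add] at hx ⊢
              obtain ⟨u, hu, v, hv, rfl⟩ := hx
              exact ⟨u + g, hper g hg u hu, v, hv, by abel⟩
            have hAc : A.card = (A.image π).card * Nat.card K := card_of_periodic K A hper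
            have hABc : (A + B).card = ((A + B).image π).card * Nat.card K :=
              card_of_periodic K _ hABper
            have hBc : B.card ≤ (B.image π).card * Nat.card K := card_le_image_mul_s15 K B
            have himgAB : (A + B).image π = A.image π + B.image π := Finset.image_add π
            have hπg0 : ∀ g ∈ K, π g = 0 := by
              intro g hg
              rw [hπdef, QuotientAddGroup.mk'_apply, QuotientAddGroup.eq_zero_iff]
              exact hg
            rcases ihN (G ⧸ K) hQle (B.image π).card (A.image π) (B.image π) le_rfl
                (hA.image π) (hB.image π) with h | ⟨Hb, hHb, hle⟩
            · left
              apply Finset.eq_univ_of_card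
              rw [hABc, himgAB, h, Finset.card_univ, hcardGQ]
            · right
              refine ⟨Hb.comap π, ?_, ?_⟩
              · intro htop
                apply hHb
                rw [AddSubgroup.eq_top_iff']
                intro q
                obtain ⟨x, rfl⟩ := QuotientAddGroup.mk'_surjective K q
                have : x ∈ Hb.comap π := htop ▸ AddSubgroup.mem_top x
                exact this
              · have e1 : Nat.card (Hb.comap π) =
                    (Finset.univ.filter (fun x : G => π x ∈ Hb)).card := by
                  rw [Nat.card_eq_fintype_card]
                  exact Fintype.card_subtype _
                set FH := Finset.univ.filter (fun x : G => π x ∈ Hb) with hFHdef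
                have hFHper : ∀ g ∈ K, ∀ x ∈ FH, x + g ∈ FH := by
                  intro g hg x hx
                  simp only [hFHdef, Finset.mem_filter, Finset.mem_univ, true_and,
                    map_add] at hx ⊢
                  rw [hπg0 g hg, add_zero]
                  exact hx
                have e2 : FH.card = (FH.image π).card * Nat.card K :=
                  card_of_periodic K FH hFHper
                have e3 : FH.image π = Finset.univ.filter (fun q : G ⧸ K => q ∈ Hb) := by
                  ext q
                  simp only [Finset.mem_image, hFHdef, Finset.mem_filter, Finset.mem_univ,
                    true_and]
                  constructor
                  · rintro ⟨x, hx, rfl⟩; exact hx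
                  · intro hq
                    obtain ⟨x, rfl⟩ := QuotientAddGroup.mk'_surjective K q
                    exact ⟨x, hq, rfl⟩
                have e4 : (Finset.univ.filter (fun q : G ⧸ K => q ∈ Hb)).card = Nat.card Hb := by
                  rw [Nat.card_eq_fintype_card]
                  exact (Fintype.card_subtype _).symm
                have e5 : Nat.card (Hb.comap π) = Nat.card Hb * Nat.card K := by
                  rw [e1, e2, e3, e4]
                calc A.card + B.card
                    ≤ ((A.image π).card + (B.image π).card) * Nat.card K := by
                      rw [add_mul, hAc]
                      exact Nat.add_le_add le_rfl hBc
                  _ ≤ ((A.image π + B.image π).card + Nat.card Hb) * Nat.card K :=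
                      Nat.mul_le_mul_right _ hle
                  _ = (A + B).card + Nat.card (Hb.comap π) := by
                      rw [add_mul, e5, hABc, himgAB]
        · -- e-transform case
          push_neg at hstuck
          obtain ⟨a, ha, b, hbB, b', hb'B, hout⟩ := hstuck
          set e := a - b with he
          set B' := B.filter (fun x => x + e ∈ A) with hB'def
          set A' := A ∪ B.image (· + e) with hA'def
          have hbin : b ∈ B' := by
            simp only [hB'def, Finset.mem_filter]
            exact ⟨hbB, by simpa [he] using ha⟩
          have hbout : b' ∉ B' := by
            simp only [hB'def, Finset.mem_filter]
            rintro ⟨-, hc⟩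
            exact hout hc
          have hssub : B' ⊂ B := ⟨Finset.filter_subset _ _, fun h => hbout (h hb'B)⟩
          have hsum : A' + B' ⊆ A + B := by
            intro x hx
            rw [Finset.mem_add] at hx ⊢
            obtain ⟨u, hu, v, hv, rfl⟩ := hx
            have hv' := Finset.mem_filter.mp hv
            rcases Finset.mem_union.mp hu with h | h
            · exact ⟨u, h, v, hv'.1, rfl⟩
            · obtain ⟨w, hw, rfl⟩ := Finset.mem_image.mp h
              exact ⟨v + e, hv'.2, w, hw, by abel⟩
          have hcards : A'.card + B'.card = A.card + B.card := by
            have h1 : A'.card + (A ∩ B.image (· + e)).card = A.card + (B.image (· + e)).card :=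
              Finset.card_union_add_card_inter _ _
            have h2 : (B.image (· + e)).card = B.card :=
              Finset.card_image_of_injective _ (add_left_injective e)
            have h3 : B'.image (· + e) = A ∩ B.image (· + e) := by
              ext x
              simp only [Finset.mem_image, hB'def, Finset.mem_filter, Finset.mem_inter]
              constructor
              · rintro ⟨w, ⟨hw, hwA⟩, rfl⟩
                exact ⟨hwA, w, hw, rfl⟩
              · rintro ⟨hxA, w, hw, rfl⟩
                exact ⟨w, ⟨hw, hxA⟩, rfl⟩
            have h4 : B'.card = (A ∩ B.image (· + e)).card := by
              rw [← h3, Finset.card_image_of_injective _ (add_left_injective e)]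
            omega
          have hA'ne : A'.Nonempty := hA.mono Finset.subset_union_left
          have hB'ne : B'.Nonempty := ⟨b, hbin⟩
          have hB'card : B'.card ≤ n := by
            have := Finset.card_lt_card hssub
            omega
          rcases ihn A' B' hB'card hA'ne hB'ne with h | ⟨H, hH, hle⟩
          · left
            exact Finset.univ_subset_iff.mp (h ▸ hsum)
          · right
            refine ⟨H, hH, ?_⟩
            calc A.card + B.card = A'.card + B'.card := hcards.symm
              _ ≤ (A' + B').card + Nat.card H := hle
              _ ≤ (A + B).card + Nat.card H := by
                  exact Nat.add_le_add_right (Finset.card_le_card hsum) _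

private lemma kneser_corollary {G : Type} [AddCommGroup G] [Fintype G] [DecidableEq G]
    (m : ℕ) (hm : ∀ H : AddSubgroup G, H ≠ ⊤ → Nat.card H ≤ m)
    (A B : Finset G) (hA : A.Nonempty) (hB : B.Nonempty) :
    A + B = Finset.univ ∨ A.card + B.card ≤ (A + B).card + m := by
  rcases kneser_lite (Fintype.card G) G le_rfl B.card A B le_rfl hA hB with h | ⟨H, hH, hle⟩
  · left; exact h
  · right; exact hle.trans (Nat.add_le_add_left (hm H hH) _)

private lemma subgroup_card_le {e : ℕ} (he : 1 ≤ e) (H : AddSubgroup (Fin e → ZMod 11))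
    (hH : H ≠ ⊤) : Nat.card H ≤ 11 ^ (e - 1) := by
  have hcard : Nat.card (Fin e → ZMod 11) = 11 ^ e := by
    rw [Nat.card_eq_fintype_card, Fintype.card_fun, ZMod.card, Fintype.card_fin]
  have hdvd : Nat.card H ∣ 11 ^ e := hcard ▸ AddSubgroup.card_addSubgroup_dvd_card H
  obtain ⟨k, hk, hke⟩ := (Nat.dvd_prime_pow (by norm_num : Nat.Prime 11)).mp hdvd
  rcases eq_or_lt_of_le hk with h | h
  · exfalso
    apply hH
    apply AddSubgroup.eq_top_of_card_eq
    rw [hke, hcard, h]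
  · rw [hke]
    exact Nat.pow_le_pow_right (by norm_num) (by omega)

private lemma inj_bound {G : Type} [AddCommGroup G] [Fintype G] (S T : Set G) (f : G → G)
    (hf : Function.Injective f) (h : ∀ a ∈ S, f a ∉ T) :
    S.ncard + T.ncard ≤ Fintype.card G := by
  have h1 : (f '' S).ncard = S.ncard := Set.ncard_image_of_injective S hf
  have hdisj : Disjoint (f '' S) T := by
    rw [Set.disjoint_left]
    rintro x ⟨a, ha, rfl⟩
    exact h a ha
  calc S.ncard + T.ncard = (f '' S ∪ T).ncard := by
        rw [Set.ncard_union_eq hdisj (Set.toFinite _) (Set.toFinite _), h1]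
    _ ≤ (Set.univ : Set G).ncard := Set.ncard_le_ncard (Set.subset_univ _) (Set.toFinite _)
    _ = Fintype.card G := by rw [Set.ncard_univ, Nat.card_eq_fintype_card]

end KneserLite2

/-- for `n ≥ 2` and subsets `A_0, …, A_10` of `𝔽_11^{n-1}` of which at most
two are empty, if `A = ⋃_k {k} × A_k` is sum-free, then with `α_i = |A_i|/11^{n-2}`:
for distinct nonzero `i, j` one has `α_i + α_j ≤ 11`, and if moreover `i + j ≠ 0` then
`α_i + α_j + α_{i+j} ≤ 12`. -/
theorem stmt_15 (n : ℕ) (hn : 2 ≤ n)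
    (Af : ZMod 11 → Set (Fin (n - 1) → ZMod 11))
    (hempty : ({k : ZMod 11 | Af k = ∅}).ncard ≤ 2)
    (hA : IsSumFree (⋃ k : ZMod 11, {k} ×ˢ Af k))
    (i j : ZMod 11) (hij : i ≠ j) (hi : i ≠ 0) (hj : j ≠ 0) :
    ((Af i).ncard : ℝ) / 11 ^ (n - 2) + ((Af j).ncard : ℝ) / 11 ^ (n - 2) ≤ 11 ∧
    (i + j ≠ 0 →
      ((Af i).ncard : ℝ) / 11 ^ (n - 2) + ((Af j).ncard : ℝ) / 11 ^ (n - 2) +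
        ((Af (i + j)).ncard : ℝ) / 11 ^ (n - 2) ≤ 12) := by
  classical
  set q : ℕ := 11 ^ (n - 2) with hqdef
  have hcardG : Fintype.card (Fin (n - 1) → ZMod 11) = 11 * q := by
    rw [Fintype.card_fun, ZMod.card, Fintype.card_fin, hqdef]
    have h1 : n - 1 = (n - 2) + 1 := by omega
    rw [h1, pow_succ]
    ring
  have hkey : ∀ (p r : ZMod 11) (a b : Fin (n - 1) → ZMod 11),
      a ∈ Af p → b ∈ Af r → a + b ∉ Af (p + r) := by
    intro p r a b hap hbr hc
    refine hA (p, a) ?_ (r, b) ?_ ?_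
    · exact Set.mem_iUnion.mpr ⟨p, by simp [hap]⟩
    · exact Set.mem_iUnion.mpr ⟨r, by simp [hbr]⟩
    · exact Set.mem_iUnion.mpr ⟨p + r, by simp [Prod.ext_iff, hc]⟩
  -- translation-based pairwise bound
  have pair : ∀ p r : ZMod 11, (Af (r - p)).Nonempty →
      (Af p).ncard + (Af r).ncard ≤ 11 * q := by
    rintro p r ⟨x, hx⟩
    rw [← hcardG]
    refine inj_bound _ _ (· + x) (add_left_injective x) ?_
    intro a ha hc
    have h2 : p + (r - p) = r := by ring
    exact (h2 ▸ hkey p (r - p) a x ha hx) hc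
  have pair2 : ∀ p r : ZMod 11, (Af (p + r)).Nonempty →
      (Af p).ncard + (Af r).ncard ≤ 11 * q := by
    rintro p r ⟨z, hz⟩
    rw [← hcardG]
    refine inj_bound _ _ (fun a => z - a) (fun x y h => sub_right_injective h) ?_
    intro a ha hc
    have h2 : a + (z - a) = z := by abel
    exact hkey p r a (z - a) ha hc (by rwa [h2])
  have hne3 : ∀ a b c : ZMod 11, a ≠ b → a ≠ c → b ≠ c →
      ((Af a).Nonempty ∨ (Af b).Nonempty ∨ (Af c).Nonempty) := by
    intro a b c hab hac hbc
    by_contra hcon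
    push_neg at hcon
    obtain ⟨h1, h2, h3⟩ := hcon
    have hsub : ({a, b, c} : Set (ZMod 11)) ⊆ {k | Af k = ∅} := by
      intro x hx
      simp only [Set.mem_insert_iff, Set.mem_singleton_iff] at hx
      rcases hx with rfl | rfl | rfl
      · exact h1
      · exact h2
      · exact h3
    have h3card : ({a, b, c} : Set (ZMod 11)).ncard = 3 := by
      rw [Set.ncard_insert_of_notMem (by simp [hab, hac]) (Set.toFinite _),
        Set.ncard_pair hbc]
    have hle := Set.ncard_le_ncard hsub (Set.toFinite _)
    omega
  have part1 : (Af i).ncard + (Af j).ncard ≤ 11 * q := by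
    have hd1 := (by decide : ∀ u v : ZMod 11, u ≠ v → u ≠ 0 → v ≠ 0 →
        (v - u ≠ u - v ∧ v - u ≠ u + v ∧ u - v ≠ u + v)) i j hij hi hj
    rcases hne3 (j - i) (i - j) (i + j) hd1.1 hd1.2.1 hd1.2.2 with h | h | h
    · exact pair i j h
    · have := pair j i h
      omega
    · exact pair2 i j h
  have part2 : i + j ≠ 0 → (Af i).ncard + (Af j).ncard + (Af (i + j)).ncard ≤ 12 * q := by
    intro hij0
    rcases Set.eq_empty_or_nonempty (Af (i + j)) with hU | hU
    · rw [hU, Set.ncard_empty]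
      omega
    rcases Set.eq_empty_or_nonempty (Af i) with hI | hI
    · rw [hI, Set.ncard_empty]
      have hd2 := (by decide : ∀ u v : ZMod 11, u ≠ v → u ≠ 0 → v ≠ 0 → u + v ≠ 0 →
          (u ≠ -u ∧ u ≠ u + v + v ∧ -u ≠ u + v + v)) i j hij hi hj hij0
      rcases hne3 i (-i) (i + j + j) hd2.1 hd2.2.1 hd2.2.2 with h | h | h
      · rw [hI] at h
        exact absurd h (by simp)
      · have h' : (Af (j - (i + j))).Nonempty := by
          have e : j - (i + j) = -i := by ring
          rwa [e]
        have := pair (i + j) j h'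
        omega
      · have h' : (Af (j + (i + j))).Nonempty := by
          have e : j + (i + j) = i + j + j := by ring
          rwa [e]
        have := pair2 j (i + j) h'
        omega
    rcases Set.eq_empty_or_nonempty (Af j) with hJ | hJ
    · rw [hJ, Set.ncard_empty]
      have hd3 := (by decide : ∀ u v : ZMod 11, u ≠ v → u ≠ 0 → v ≠ 0 → u + v ≠ 0 →
          (v ≠ -v ∧ v ≠ u + v + u ∧ -v ≠ u + v + u)) i j hij hi hj hij0
      rcases hne3 j (-j) (i + j + i) hd3.1 hd3.2.1 hd3.2.2 with h | h | h
      · rw [hJ] at h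
        exact absurd h (by simp)
      · have h' : (Af (i - (i + j))).Nonempty := by
          have e : i - (i + j) = -j := by ring
          rwa [e]
        have := pair (i + j) i h'
        omega
      · have h' : (Af (i + (i + j))).Nonempty := by
          have e : i + (i + j) = i + j + i := by ring
          rwa [e]
        have := pair2 i (i + j) h'
        omega
    · set Fi := (Set.toFinite (Af i)).toFinset with hFi
      set Fj := (Set.toFinite (Af j)).toFinset with hFj
      set Fu := (Set.toFinite (Af (i + j))).toFinset with hFu
      have hci : (Af i).ncard = Fi.card := Set.ncard_eq_toFinset_card _ _
      have hcj : (Af j).ncard = Fj.card := Set.ncard_eq_toFinset_card _ _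
      have hcu : (Af (i + j)).ncard = Fu.card := Set.ncard_eq_toFinset_card _ _
      have hFine : Fi.Nonempty := by
        rw [hFi, Set.Finite.toFinset_nonempty]
        exact hI
      have hFjne : Fj.Nonempty := by
        rw [hFj, Set.Finite.toFinset_nonempty]
        exact hJ
      have hdisj : Disjoint (Fi + Fj) Fu := by
        rw [Finset.disjoint_left]
        intro x hx hxu
        rw [Finset.mem_add] at hx
        obtain ⟨a, ha, b, hb, rfl⟩ := hx
        rw [hFi, Set.Finite.mem_toFinset] at ha
        rw [hFj, Set.Finite.mem_toFinset] at hb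
        rw [hFu, Set.Finite.mem_toFinset] at hxu
        exact hkey i j a b ha hb hxu
      have hsub : ∀ H : AddSubgroup (Fin (n - 1) → ZMod 11), H ≠ ⊤ → Nat.card H ≤ q := by
        intro H hH
        have h5 := subgroup_card_le (by omega) H hH
        have e : (n - 1) - 1 = n - 2 := by omega
        rwa [e] at h5
      rcases kneser_corollary q hsub Fi Fj hFine hFjne with h | h
      · exfalso
        obtain ⟨u, hu⟩ := hU
        have hmm : u ∈ Fi + Fj := by
          rw [h]
          exact Finset.mem_univ u
        rw [Finset.mem_add] at hmm
        obtain ⟨a, ha, b, hb, rfl⟩ := hmm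
        rw [hFi, Set.Finite.mem_toFinset] at ha
        rw [hFj, Set.Finite.mem_toFinset] at hb
        exact hkey i j a b ha hb hu
      · have hup : (Fi + Fj).card + Fu.card ≤ 11 * q := by
          rw [← Finset.card_union_of_disjoint hdisj, ← hcardG]
          exact Finset.card_le_univ _
        omega
  have hqpos : (0 : ℝ) < 11 ^ (n - 2) := by positivity
  constructor
  · rw [← add_div, div_le_iff₀ hqpos]
    calc ((Af i).ncard : ℝ) + ((Af j).ncard : ℝ) ≤ ((11 * q : ℕ) : ℝ) := by
          exact_mod_cast part1
      _ = 11 * 11 ^ (n - 2) := by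
          rw [hqdef]
          push_cast
          ring
  · intro hij0
    rw [← add_div, ← add_div, div_le_iff₀ hqpos]
    calc ((Af i).ncard : ℝ) + ((Af j).ncard : ℝ) + ((Af (i + j)).ncard : ℝ)
        ≤ ((12 * q : ℕ) : ℝ) := by exact_mod_cast part2 hij0
      _ = 12 * 11 ^ (n - 2) := by
          rw [hqdef]
          push_cast
          ring
end

section
/- Let p = 6m−1 be prime with p ≥ 17. Then sf₂(𝔽_p) = 2m − 2; moreover, sf₂(𝔽_11) = 0. -/
open Pointwise

set_option linter.unusedSectionVars false
set_option linter.unusedVariables false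

section General

variable {G : Type*} [AddCommGroup G] [Fintype G] {k : ℕ} {A B : Set G}

lemma myBddAbove (k : ℕ) : BddAbove (Set.ncard '' SF G k) := by
  refine ⟨Fintype.card G, ?_⟩
  rintro n ⟨A, -, rfl⟩
  simpa [Set.ncard_univ] using Set.ncard_le_ncard (Set.subset_univ A) Set.finite_univ

lemma mem_SF_zero : A ∈ SF G 0 ↔ IsSumFree A := by
  simp only [SF, Set.mem_setOf_eq]

lemma mem_SF_succ : A ∈ SF G (k + 1) ↔
    A ∈ SF G k ∧ ¬ ∃ B ∈ SF G k, B.ncard = sf G k ∧ A ⊆ B := by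
  simp only [SF, Set.mem_setOf_eq, sf]

lemma sumfree_of_mem_SF : ∀ {k : ℕ}, A ∈ SF G k → IsSumFree A
  | 0, h => mem_SF_zero.mp h
  | k + 1, h => sumfree_of_mem_SF (mem_SF_succ.mp h).1

lemma ncard_le_sf (h : A ∈ SF G k) : A.ncard ≤ sf G k :=
  le_csSup (myBddAbove k) ⟨A, h, rfl⟩

lemma SF_succ_ncard_lt (h : A ∈ SF G (k + 1)) : A.ncard < sf G k := by
  rw [mem_SF_succ] at h
  exact lt_of_le_of_ne (ncard_le_sf h.1) fun e => h.2 ⟨A, h.1, e, subset_rfl⟩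

lemma sumfree_subset (h : B ⊆ A) (hA : IsSumFree A) : IsSumFree B :=
  fun x hx y hy hxy => hA x (h hx) y (h hy) (h hxy)

/-- A maximal sum-free set: cannot be extended by any single element. -/
def MaxSF {H : Type*} [AddCommGroup H] (A : Set H) : Prop :=
  IsSumFree A ∧ ∀ x ∉ A, ¬ IsSumFree (insert x A)

lemma MaxSF.not_ssubset (hA : MaxSF A) (hB : IsSumFree B) (hAB : A ⊆ B)
    (hne : A.ncard ≠ B.ncard) : False := by
  have hABne : A ≠ B := fun h => hne (by rw [h])
  obtain ⟨x, hxB, hxA⟩ := Set.exists_of_ssubset ⟨hAB, fun h => hABne (subset_antisymm hAB h)⟩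
  exact hA.2 x hxA (sumfree_subset (Set.insert_subset hxB hAB) hB)

lemma MaxSF.mem_SF1 (hA : MaxSF A) (h0 : A.ncard ≠ sf G 0) : A ∈ SF G 1 := by
  rw [mem_SF_succ]
  refine ⟨mem_SF_zero.mpr hA.1, ?_⟩
  rintro ⟨B, hB, hcard, hsub⟩
  exact hA.not_ssubset (mem_SF_zero.mp hB) hsub (by rw [hcard]; exact h0)

lemma MaxSF.mem_SF2 (hA : MaxSF A) (h0 : A.ncard ≠ sf G 0) (h1 : A.ncard ≠ sf G 1) :
    A ∈ SF G 2 := by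
  rw [show (2 : ℕ) = 1 + 1 from rfl, mem_SF_succ]
  refine ⟨hA.mem_SF1 h0, ?_⟩
  rintro ⟨B, hB, hcard, hsub⟩
  exact hA.not_ssubset (sumfree_of_mem_SF hB) hsub (by rw [hcard]; exact h1)

lemma extend_maximal (hA : IsSumFree A) : ∃ B, MaxSF B ∧ A ⊆ B := by
  classical
  obtain ⟨B, ⟨hBsf, hAB⟩, hmax⟩ :=
    Set.Finite.exists_maximalFor Set.ncard {C : Set G | IsSumFree C ∧ A ⊆ C}
      (Set.toFinite _) ⟨A, hA, subset_rfl⟩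
  refine ⟨B, ⟨hBsf, fun x hx hins => ?_⟩, hAB⟩
  have h1 : B.ncard ≤ (insert x B).ncard :=
    Set.ncard_le_ncard (Set.subset_insert x B) (Set.toFinite _)
  have h2 := hmax (j := insert x B) ⟨hins, hAB.trans (Set.subset_insert x B)⟩ h1
  rw [Set.ncard_insert_of_notMem hx (Set.toFinite B)] at h2
  omega

end General

section Intervals

variable {p m : ℕ}

lemma cast_eq_cast_iff (hp : 0 < p) {i j : ℕ} (hi : i < 2 * p) (hj : j < p) :
    ((i : ZMod p) = (j : ZMod p)) ↔ (i = j ∨ i = j + p) := by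
  rw [ZMod.natCast_eq_natCast_iff, Nat.ModEq]
  rcases lt_or_ge i p with h' | h'
  · rw [Nat.mod_eq_of_lt h', Nat.mod_eq_of_lt hj]; omega
  · rw [Nat.mod_eq_sub_mod h', Nat.mod_eq_of_lt (by omega), Nat.mod_eq_of_lt hj]; omega

lemma mem_Ival {a b : ℕ} {x : ZMod p} :
    x ∈ Ival p a b ↔ ∃ i, a ≤ i ∧ i ≤ b ∧ (i : ZMod p) = x := by
  simp [Ival, Set.mem_image, Set.mem_Icc, and_assoc]

lemma Ival_ncard {a b : ℕ} (hb : b < p) : (Ival p a b).ncard = b + 1 - a := by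
  have hp : 0 < p := by omega
  rw [Ival, Set.ncard_image_of_injOn, ← Finset.coe_Icc, Set.ncard_coe_finset, Nat.card_Icc]
  intro i hi j hj hij
  rw [Set.mem_Icc] at hi hj
  have := (cast_eq_cast_iff hp (i := i) (j := j) (by omega) (by omega)).mp hij
  have := (cast_eq_cast_iff hp (i := j) (j := i) (by omega) (by omega)).mp hij.symm
  omega

lemma Ival_sumfree {a b : ℕ} (hb : b < p) (h1 : b < 2 * a) (h2 : 2 * b < p + a) :
    IsSumFree (Ival p a b) := by
  have hp : 0 < p := by omega
  rintro x hx y hy hz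
  obtain ⟨i, hi1, hi2, rfl⟩ := mem_Ival.mp hx
  obtain ⟨j, hj1, hj2, rfl⟩ := mem_Ival.mp hy
  rw [← Nat.cast_add] at hz
  obtain ⟨k, hk1, hk2, hk⟩ := mem_Ival.mp hz
  have := (cast_eq_cast_iff hp (i := i + j) (j := k) (by omega) (by omega)).mp hk.symm
  omega

lemma Ival_maximal [NeZero p] {a b : ℕ} (hb : b < p) (h1 : b < 2 * a) (h2 : 2 * b < p + a)
    (hcover : ∀ v : ℕ, v < p → (a ≤ v ∧ v ≤ b) ∨ (v + a ≤ b) ∨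
      (∃ i j, a ≤ i ∧ i ≤ b ∧ a ≤ j ∧ j ≤ b ∧ (i + j = v ∨ v + i = j + p))) :
    MaxSF (Ival p a b) := by
  have hp : 0 < p := NeZero.pos p
  refine ⟨Ival_sumfree hb h1 h2, fun x hx hsf => ?_⟩
  set v := x.val with hv
  have hvp : v < p := ZMod.val_lt x
  have hxv : ((v : ℕ) : ZMod p) = x := by rw [hv, ZMod.natCast_val, ZMod.cast_id]
  rcases hcover v hvp with hmem | hlow | ⟨i, j, hi1, hi2, hj1, hj2, heq⟩
  · exact hx (mem_Ival.mpr ⟨v, hmem.1, hmem.2, hxv⟩)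
  · -- v + a ∈ [a, b], so x + a = (v + a) violates sum-freeness
    refine hsf x (Set.mem_insert x _)
      ((a : ℕ) : ZMod p) (Set.mem_insert_of_mem _ (mem_Ival.mpr ⟨a, le_rfl, by omega, rfl⟩))
      (Set.mem_insert_of_mem _ (mem_Ival.mpr ⟨v + a, by omega, hlow, ?_⟩))
    rw [Nat.cast_add, hxv]
  · rcases heq with heq | heq
    · -- i + j = v : elements of the interval summing to x
      refine hsf ((i : ℕ) : ZMod p)
        (Set.mem_insert_of_mem _ (mem_Ival.mpr ⟨i, hi1, hi2, rfl⟩))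
        ((j : ℕ) : ZMod p)
        (Set.mem_insert_of_mem _ (mem_Ival.mpr ⟨j, hj1, hj2, rfl⟩)) ?_
      rw [← Nat.cast_add, heq, hxv]
      exact Set.mem_insert x _
    · -- v + i = j + p : x + i = j in ZMod p
      refine hsf x (Set.mem_insert x _)
        ((i : ℕ) : ZMod p) (Set.mem_insert_of_mem _ (mem_Ival.mpr ⟨i, hi1, hi2, rfl⟩))
        (Set.mem_insert_of_mem _ (mem_Ival.mpr ⟨j, hj1, hj2, ?_⟩))
      rw [← hxv, ← Nat.cast_add, heq, Nat.cast_add, ZMod.natCast_self, add_zero]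

end Intervals

section MainZMod

variable {p m : ℕ}

lemma sumfree_ncard_le [NeZero p] (hp : p.Prime) (hpm : p = 6 * m - 1) (hm : 2 ≤ m)
    {A : Set (ZMod p)} (hA : IsSumFree A) : A.ncard ≤ 2 * m := by
  classical
  rcases A.eq_empty_or_nonempty with rfl | hne
  · simp
  have hF : A.Finite := A.toFinite
  have hsne : hF.toFinset.Nonempty := by rwa [Set.Finite.toFinset_nonempty]
  set s := hF.toFinset with hs
  have hcard : A.ncard = s.card := by rw [Set.ncard_eq_toFinset_card _ hF]
  have hdisj : ∀ z ∈ s + s, z ∉ s := by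
    intro z hz hzs
    rw [Finset.mem_add] at hz
    obtain ⟨u, hu, w, hw, huw⟩ := hz
    subst huw
    exact hA u ((Set.Finite.mem_toFinset hF).mp hu) w ((Set.Finite.mem_toFinset hF).mp hw)
      ((Set.Finite.mem_toFinset hF).mp hzs)
  have hsub : s + s ⊆ Finset.univ \ s :=
    fun z hz => Finset.mem_sdiff.mpr ⟨Finset.mem_univ z, fun h => hdisj z hz h⟩
  have h1 : (s + s).card ≤ p - s.card := by
    calc (s + s).card ≤ (Finset.univ \ s).card := Finset.card_le_card hsub
      _ = Finset.univ.card - s.card := Finset.card_sdiff_of_subset (Finset.subset_univ s)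
      _ = p - s.card := by rw [Finset.card_univ, ZMod.card]
  have h2 := ZMod.cauchy_davenport hp hsne hsne
  have h3 : 0 < s.card := Finset.card_pos.mpr hsne
  rw [hcard]
  rcases min_cases p (s.card + s.card - 1) with ⟨he, hle⟩ | ⟨he, hle⟩ <;> rw [he] at h2 <;> omega

lemma sf0_eq [NeZero p] (hp : p.Prime) (hpm : p = 6 * m - 1) (hm : 2 ≤ m) :
    sf (ZMod p) 0 = 2 * m := by
  have hM : IsSumFree (Ival p (2 * m) (4 * m - 1)) :=
    Ival_sumfree (by omega) (by omega) (by omega)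
  have hMc : (Ival p (2 * m) (4 * m - 1)).ncard = 2 * m := by
    rw [Ival_ncard (by omega)]; omega
  apply le_antisymm
  · refine csSup_le ⟨_, Set.mem_image_of_mem Set.ncard (mem_SF_zero.mpr hM)⟩ ?_
    rintro n ⟨A, hA, rfl⟩
    exact sumfree_ncard_le hp hpm hm (mem_SF_zero.mp hA)
  · rw [← hMc]
    exact ncard_le_sf (mem_SF_zero.mpr hM)

lemma J_maximal [NeZero p] (hpm : p = 6 * m - 1) (hm : 2 ≤ m) :
    MaxSF (Ival p (2 * m - 1) (4 * m - 3)) := by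
  apply Ival_maximal (by omega) (by omega) (by omega)
  intro v hvp
  rcases lt_or_ge v (2 * m - 1) with hc | hc
  · exact Or.inr (Or.inl (by omega))
  rcases le_or_gt v (4 * m - 3) with hc2 | hc2
  · exact Or.inl ⟨hc, hc2⟩
  rcases le_or_gt v (6 * m - 4) with hc3 | hc3
  · exact Or.inr (Or.inr ⟨2 * m - 1, v - (2 * m - 1), le_rfl, by omega, by omega, by omega,
      Or.inl (by omega)⟩)
  · exact Or.inr (Or.inr ⟨v - (4 * m - 3), 4 * m - 3, by omega, by omega, by omega, le_rfl,
      Or.inl (by omega)⟩)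

lemma sf1_eq [NeZero p] (hp : p.Prime) (hpm : p = 6 * m - 1) (hm : 2 ≤ m) :
    sf (ZMod p) 1 = 2 * m - 1 := by
  have hJ := J_maximal hpm hm
  have hJc : (Ival p (2 * m - 1) (4 * m - 3)).ncard = 2 * m - 1 := by
    rw [Ival_ncard (by omega)]; omega
  have hJ1 : Ival p (2 * m - 1) (4 * m - 3) ∈ SF (ZMod p) 1 :=
    hJ.mem_SF1 (by rw [hJc, sf0_eq hp hpm hm]; omega)
  apply le_antisymm
  · refine csSup_le ⟨_, Set.mem_image_of_mem Set.ncard hJ1⟩ ?_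
    rintro n ⟨A, hA, rfl⟩
    have := SF_succ_ncard_lt hA
    rw [sf0_eq hp hpm hm] at this
    omega
  · rw [← hJc]
    exact ncard_le_sf hJ1

lemma A2_maximal [NeZero p] (hpm : p = 6 * m - 1) (hm : 3 ≤ m) :
    MaxSF (Ival p (2 * m - 2) (4 * m - 5)) := by
  apply Ival_maximal (by omega) (by omega) (by omega)
  intro v hvp
  rcases lt_or_ge v (2 * m - 2) with hc | hc
  · exact Or.inr (Or.inl (by omega))
  rcases le_or_gt v (4 * m - 5) with hc2 | hc2
  · exact Or.inl ⟨hc, hc2⟩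
  rcases le_or_gt v (6 * m - 7) with hc3 | hc3
  · exact Or.inr (Or.inr ⟨2 * m - 2, v - (2 * m - 2), le_rfl, by omega, by omega, by omega,
      Or.inl (by omega)⟩)
  rcases le_or_gt v (8 * m - 10) with hc4 | hc4
  · exact Or.inr (Or.inr ⟨v - (4 * m - 5), 4 * m - 5, by omega, by omega, by omega, le_rfl,
      Or.inl (by omega)⟩)
  · exact Or.inr (Or.inr ⟨4 * m - 5, v - (2 * m + 4), by omega, le_rfl, by omega, by omega,
      Or.inr (by omega)⟩)

lemma sf2_eq [NeZero p] (hp : p.Prime) (hpm : p = 6 * m - 1) (hm : 3 ≤ m) :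
    sf (ZMod p) 2 = 2 * m - 2 := by
  have hA := A2_maximal hpm hm
  have hAc : (Ival p (2 * m - 2) (4 * m - 5)).ncard = 2 * m - 2 := by
    rw [Ival_ncard (by omega)]; omega
  have hA2 : Ival p (2 * m - 2) (4 * m - 5) ∈ SF (ZMod p) 2 :=
    hA.mem_SF2 (by rw [hAc, sf0_eq hp hpm (by omega)]; omega)
      (by rw [hAc, sf1_eq hp hpm (by omega)]; omega)
  apply le_antisymm
  · refine csSup_le ⟨_, Set.mem_image_of_mem Set.ncard hA2⟩ ?_
    rintro n ⟨A, hA', rfl⟩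
    have := SF_succ_ncard_lt (k := 1) hA'
    rw [sf1_eq hp hpm (by omega)] at this
    omega
  · rw [← hAc]
    exact ncard_le_sf hA2

end MainZMod


section Z11

/-- Sum-freeness for finsets, decidably. -/
def sfF (s : Finset (ZMod 11)) : Prop := ∀ x ∈ s, ∀ y ∈ s, x + y ∉ s

instance : DecidablePred sfF := fun s => by unfold sfF; infer_instance

lemma sfF_coe {s : Finset (ZMod 11)} : IsSumFree (↑s : Set (ZMod 11)) ↔ sfF s := by
  simp [IsSumFree, sfF]

lemma P2 : ∀ x y : ZMod 11, sfF {x, y} →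
    ∃ z : ZMod 11, z ∉ ({x, y} : Finset (ZMod 11)) ∧ sfF {x, y, z} := by decide

lemma Z11_maximal_card {B : Set (ZMod 11)} (hB : MaxSF B) : B.ncard = 3 ∨ B.ncard = 4 := by
  haveI : NeZero (11 : ℕ) := ⟨by norm_num⟩
  have h4 : B.ncard ≤ 4 := by
    have := sumfree_ncard_le (p := 11) (m := 2) (by norm_num) (by norm_num) (by norm_num) hB.1
    simpa using this
  have h3 : 3 ≤ B.ncard := by
    by_contra hcon
    push_neg at hcon
    have hcases : B.ncard = 0 ∨ B.ncard = 1 ∨ B.ncard = 2 := by omega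
    rcases hcases with h0 | h1 | h2
    · rw [Set.ncard_eq_zero] at h0
      subst h0
      refine hB.2 1 (by simp) ?_
      intro u hu w hw huw
      simp only [Set.mem_insert_iff, Set.mem_empty_iff_false, or_false] at hu hw huw
      subst hu; subst hw
      exact (by decide : ((1 : ZMod 11) + 1 ≠ 1)) huw
    · obtain ⟨a, rfl⟩ := Set.ncard_eq_one.mp h1
      have hset : ((insert a {a} : Finset (ZMod 11)) : Set (ZMod 11)) = {a} := by simp
      have hsf : sfF {a, a} := sfF_coe.mp (by rw [hset]; exact hB.1)
      obtain ⟨z, hz, hzsf⟩ := P2 a a hsf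
      simp only [Finset.mem_insert, Finset.mem_singleton, or_self] at hz
      refine hB.2 z (by simp [hz]) ?_
      have hset2 : ((insert a (insert a {z}) : Finset (ZMod 11)) : Set (ZMod 11)) =
          insert z ({a} : Set (ZMod 11)) := by
        ext u; simp; tauto
      rw [← hset2]
      exact sfF_coe.mpr hzsf
    · obtain ⟨a, b, hab, rfl⟩ := Set.ncard_eq_two.mp h2
      have hset : ((insert a {b} : Finset (ZMod 11)) : Set (ZMod 11)) = {a, b} := by simp
      have hsf : sfF {a, b} := sfF_coe.mp (by rw [hset]; exact hB.1)
      obtain ⟨z, hz, hzsf⟩ := P2 a b hsf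
      simp only [Finset.mem_insert, Finset.mem_singleton] at hz
      push_neg at hz
      refine hB.2 z (by simp [hz.1, hz.2]) ?_
      have hset2 : ((insert a (insert b {z}) : Finset (ZMod 11)) : Set (ZMod 11)) =
          insert z ({a, b} : Set (ZMod 11)) := by
        ext u; simp; tauto
      rw [← hset2]
      exact sfF_coe.mpr hzsf
  omega

lemma Z11_SF2_empty : SF (ZMod 11) 2 = ∅ := by
  haveI : NeZero (11 : ℕ) := ⟨by norm_num⟩
  rw [Set.eq_empty_iff_forall_notMem]
  intro A hA
  rw [show (2 : ℕ) = 1 + 1 from rfl, mem_SF_succ] at hA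
  obtain ⟨hA1, hA2⟩ := hA
  obtain ⟨B, hBmax, hAB⟩ := extend_maximal (sumfree_of_mem_SF hA1)
  have hsf0 : sf (ZMod 11) 0 = 4 := by
    have := sf0_eq (p := 11) (m := 2) (by norm_num) (by norm_num) (by norm_num)
    simpa using this
  have hsf1 : sf (ZMod 11) 1 = 3 := by
    have := sf1_eq (p := 11) (m := 2) (by norm_num) (by norm_num) (by norm_num)
    simpa using this
  rcases Z11_maximal_card hBmax with h3 | h4
  · exact hA2 ⟨B, hBmax.mem_SF1 (by rw [h3, hsf0]; norm_num), by rw [h3, hsf1], hAB⟩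
  · rw [mem_SF_succ] at hA1
    exact hA1.2 ⟨B, mem_SF_zero.mpr hBmax.1, by rw [h4, hsf0], hAB⟩

lemma Z11_sf2 : sf (ZMod 11) 2 = 0 := by
  rw [sf, Z11_SF2_empty]
  simp

end Z11

/-- for a prime `p = 6m-1 ≥ 17` one has `sf₂(𝔽_p) = 2m - 2`; moreover
`sf₂(𝔽_11) = 0`. -/
theorem stmt_18 (p m : ℕ) [NeZero p] (hp : p.Prime) (hpm : p = 6 * m - 1)
    (hp17 : 17 ≤ p) :
    sf (ZMod p) 2 = 2 * m - 2 ∧ sf (ZMod 11) 2 = 0 := by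
  constructor
  · exact sf2_eq hp hpm (by omega)
  · exact Z11_sf2
end
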